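/- arXiv:1207.6265 — 8 statements merged into one kernel-verified Lean document; each statement's English description precedes it below -/
import Mathlib

section
/- Preservation of the radical coordinate vector under mutation between cyclic diagrams: let (c, B) be a Y-seed where c = (c_1,c_2,c_3) is a basis of Q^3 of sign-coherent integer vectors, B a 3×3 skew-symmetrizable matrix with skew-symmetrizer diag(d_1,d_2,d_3) whose diagram is cyclic, and let u = d_2|B_{23}|·c_1 + d_3|B_{31}|·c_2 + d_1|B_{12}|·c_3. Let (c',B') = μ_k(c,B) and suppose the diagram of B' is also cyclic. Then u = d_2|B'_{23}|·c'_1 + d_3|B'_{31}|·c'_2 + d_1|B'_{12}|·c'_3. -/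
open Matrix BigOperators

/-- Matrix mutation in direction `k`. -/
def mutate {n : ℕ} (B : Matrix (Fin n) (Fin n) ℤ) (k : Fin n) : Matrix (Fin n) (Fin n) ℤ :=
  fun i j =>
    if i = k ∨ j = k then -B i j
    else B i j + max (B i k) 0 * max (B k j) 0 - max (-B i k) 0 * max (-B k j) 0

/-- A vector is sign coherent: nonzero and entrywise nonnegative or entrywise nonpositive. -/
def signCoherent {n : ℕ} (c : Fin n → ℤ) : Prop :=
  c ≠ 0 ∧ ((∀ j, 0 ≤ c j) ∨ (∀ j, c j ≤ 0))

/-- The sign of a sign-coherent vector. -/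
def sgn {n : ℕ} (c : Fin n → ℤ) : ℤ :=
  if ∀ j, 0 ≤ c j then 1 else -1

/-- Mutation of the tuple of c-vectors. -/
def cmut {n : ℕ} (B : Matrix (Fin n) (Fin n) ℤ) (k : Fin n)
    (c : Fin n → Fin n → ℤ) : Fin n → Fin n → ℤ :=
  fun i => if i = k then -c k else c i + max (sgn (c k) * B k i) 0 • c k

/-- Y-seed mutation on a pair (c, B). -/
def ymut {n : ℕ} (s : (Fin n → Fin n → ℤ) × Matrix (Fin n) (Fin n) ℤ) (k : Fin n) :
    (Fin n → Fin n → ℤ) × Matrix (Fin n) (Fin n) ℤ :=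
  (cmut s.2 k s.1, mutate s.2 k)

/-- `d` is a skew-symmetrizer of `B`. -/
def skewSymmetrizer {n : ℕ} (d : Fin n → ℤ) (B : Matrix (Fin n) (Fin n) ℤ) : Prop :=
  (∀ i, 0 < d i) ∧ ∀ i j, d i * B i j = -(d j * B j i)

/-- The diagram of a 3×3 matrix is cyclic: all of B₂₁, B₃₂, B₁₃ are nonzero with equal signs. -/
def isCyclic (B : Matrix (Fin 3) (Fin 3) ℤ) : Prop :=
  (0 < B 1 0 ∧ 0 < B 2 1 ∧ 0 < B 0 2) ∨ (B 1 0 < 0 ∧ B 2 1 < 0 ∧ B 0 2 < 0)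

/-- The radical vector (d₂|B₂₃|, d₃|B₃₁|, d₁|B₁₂|) for a cyclic 3×3 matrix. -/
def ucyc (B : Matrix (Fin 3) (Fin 3) ℤ) (d : Fin 3 → ℤ) : Fin 3 → ℤ :=
  ![d 1 * |B 1 2|, d 2 * |B 2 0|, d 0 * |B 0 1|]

/-- `s` is a source of the diagram of `B`: no edges point into `s`. -/
def isSource (B : Matrix (Fin 3) (Fin 3) ℤ) (s : Fin 3) : Prop := ∀ i, i ≠ s → B s i ≤ 0

/-- `t` is a sink of the diagram of `B`: no edges point out of `t`. -/
def isSink (B : Matrix (Fin 3) (Fin 3) ℤ) (t : Fin 3) : Prop := ∀ i, i ≠ t → 0 ≤ B t i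

/-- The standard basis of ℤ^n as a tuple of c-vectors. -/
def stdc (n : ℕ) : Fin n → Fin n → ℤ := fun i j => if i = j then 1 else 0

set_option maxHeartbeats 4000000 in
theorem radical_coords_cyclic_to_cyclic (B : Matrix (Fin 3) (Fin 3) ℤ)
    (d : Fin 3 → ℤ) (hd : skewSymmetrizer d B)
    (c : Fin 3 → Fin 3 → ℤ)
    (hbasis : LinearIndependent ℚ (fun i => fun j => (c i j : ℚ)))
    (hc : ∀ i, signCoherent (c i))
    (hcyc : isCyclic B) (k : Fin 3)
    (hcyc' : isCyclic (mutate B k)) :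
    (fun j => ∑ i, ucyc B d i * c i j) =
      (fun j => ∑ i, ucyc (mutate B k) d i * cmut B k c i j) := by
  have hdp := hd.1
  have hs := hd.2
  have hd0 := hdp 0
  have hd1 := hdp 1
  have hd2 := hdp 2
  have h10 := hs 1 0
  have h12 := hs 1 2
  have h02 := hs 0 2
  have hk : k = 0 ∨ k = 1 ∨ k = 2 := by omega
  rcases hk with rfl | rfl | rfl
  · -- k = 0
    have hcyc2 : isCyclic (mutate B 0) := hcyc'
    rcases hcyc with ⟨hb10, hb21, hb02⟩ | ⟨hb10, hb21, hb02⟩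
    · have hb01 : B 0 1 < 0 := by nlinarith
      have hb12 : B 1 2 < 0 := by nlinarith
      have hb20 : B 2 0 < 0 := by nlinarith
      have eCh : mutate B 0 1 2 = B 1 2 + B 1 0 * B 0 2 := by
        simp only [mutate]
        rw [if_neg (by decide : ¬((1:Fin 3) = 0 ∨ (2:Fin 3) = 0))]
        rw [show B 1 0 ⊔ 0 = B 1 0 from by omega, show B 0 2 ⊔ 0 = B 0 2 from by omega,
          show -B 1 0 ⊔ 0 = 0 from by omega, show -B 0 2 ⊔ 0 = 0 from by omega]
        ring
      have eN0 : mutate B 0 2 0 = -(B 2 0) := by simp [mutate]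
      have eN1 : mutate B 0 0 1 = -(B 0 1) := by simp [mutate]
      have eM : mutate B 0 2 1 = B 2 1 - B 2 0 * B 0 1 := by
        simp only [mutate]
        rw [if_neg (by decide : ¬((2:Fin 3) = 0 ∨ (1:Fin 3) = 0))]
        rw [show B 2 0 ⊔ 0 = 0 from by omega, show B 0 1 ⊔ 0 = 0 from by omega,
          show -B 2 0 ⊔ 0 = -B 2 0 from by omega, show -B 0 1 ⊔ 0 = -B 0 1 from by omega]
        ring
      have eW : mutate B 0 1 0 = -(B 1 0) := by simp [mutate]
      have hm : B 2 1 - B 2 0 * B 0 1 < 0 := by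
        rcases hcyc2 with h | h
        · rw [eW] at h; omega
        · have := h.2.1; rw [eM] at this; exact this
      have hkey : d 1 * (B 1 2 + B 1 0 * B 0 2) = -(d 2 * (B 2 1 - B 2 0 * B 0 1)) := by
        linear_combination hs 1 2 + B 0 2 * hs 1 0 - B 0 1 * hs 2 0
      have key : 0 < B 1 2 + B 1 0 * B 0 2 := by nlinarith [hkey, mul_pos hd2 (show 0 < -(B 2 1 - B 2 0 * B 0 1) from by linarith), hd1]
      funext j
      simp only [ucyc, cmut, Fin.sum_univ_three, Matrix.cons_val_zero, Matrix.cons_val_one,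
        Matrix.head_cons, Matrix.cons_val_two, Matrix.tail_cons, eCh, eN0, eN1,
        Pi.add_apply, Pi.smul_apply, Pi.neg_apply, smul_eq_mul,
        show (((0:Fin 3) = (0:Fin 3))) = True from by simp, show (((1:Fin 3) = (0:Fin 3))) = False from by simp, show (((2:Fin 3) = (0:Fin 3))) = False from by simp, if_true, if_false]
      rw [abs_neg, abs_neg, abs_of_pos key, abs_of_neg hb12, abs_of_neg hb20, abs_of_neg hb01]
      by_cases he : ∀ j, 0 ≤ c 0 j
      · simp only [sgn, if_pos he]
        rw [show 1 * B 0 1 ⊔ 0 = 0 from by omega, show 1 * B 0 2 ⊔ 0 = 1 * B 0 2 from by omega]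
        linear_combination (c 0 j * B 0 2) * (hs 1 0)
      · simp only [sgn, if_neg he]
        rw [show -1 * B 0 1 ⊔ 0 = -1 * B 0 1 from by omega, show -1 * B 0 2 ⊔ 0 = 0 from by omega]
        linear_combination (c 0 j * B 0 2) * (hs 1 0) - (c 0 j * B 0 1) * (hs 2 0)
    · have hb01 : 0 < B 0 1 := by nlinarith
      have hb12 : 0 < B 1 2 := by nlinarith
      have hb20 : 0 < B 2 0 := by nlinarith
      have eCh : mutate B 0 1 2 = B 1 2 - B 1 0 * B 0 2 := by
        simp only [mutate]
        rw [if_neg (by decide : ¬((1:Fin 3) = 0 ∨ (2:Fin 3) = 0))]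
        rw [show B 1 0 ⊔ 0 = 0 from by omega, show B 0 2 ⊔ 0 = 0 from by omega,
          show -B 1 0 ⊔ 0 = -B 1 0 from by omega, show -B 0 2 ⊔ 0 = -B 0 2 from by omega]
        ring
      have eN0 : mutate B 0 2 0 = -(B 2 0) := by simp [mutate]
      have eN1 : mutate B 0 0 1 = -(B 0 1) := by simp [mutate]
      have eM : mutate B 0 2 1 = B 2 1 + B 2 0 * B 0 1 := by
        simp only [mutate]
        rw [if_neg (by decide : ¬((2:Fin 3) = 0 ∨ (1:Fin 3) = 0))]
        rw [show B 2 0 ⊔ 0 = B 2 0 from by omega, show B 0 1 ⊔ 0 = B 0 1 from by omega,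
          show -B 2 0 ⊔ 0 = 0 from by omega, show -B 0 1 ⊔ 0 = 0 from by omega]
        ring
      have eW : mutate B 0 1 0 = -(B 1 0) := by simp [mutate]
      have hm : 0 < B 2 1 + B 2 0 * B 0 1 := by
        rcases hcyc2 with h | h
        · have := h.2.1; rw [eM] at this; exact this
        · rw [eW] at h; omega
      have hkey : d 1 * (B 1 2 - B 1 0 * B 0 2) = -(d 2 * (B 2 1 + B 2 0 * B 0 1)) := by
        linear_combination hs 1 2 - B 0 2 * hs 1 0 + B 0 1 * hs 2 0
      have key : B 1 2 - B 1 0 * B 0 2 < 0 := by nlinarith [hkey, mul_pos hd2 hm, hd1]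
      funext j
      simp only [ucyc, cmut, Fin.sum_univ_three, Matrix.cons_val_zero, Matrix.cons_val_one,
        Matrix.head_cons, Matrix.cons_val_two, Matrix.tail_cons, eCh, eN0, eN1,
        Pi.add_apply, Pi.smul_apply, Pi.neg_apply, smul_eq_mul,
        show (((0:Fin 3) = (0:Fin 3))) = True from by simp, show (((1:Fin 3) = (0:Fin 3))) = False from by simp, show (((2:Fin 3) = (0:Fin 3))) = False from by simp, if_true, if_false]
      rw [abs_neg, abs_neg, abs_of_neg key, abs_of_pos hb12, abs_of_pos hb20, abs_of_pos hb01]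
      by_cases he : ∀ j, 0 ≤ c 0 j
      · simp only [sgn, if_pos he]
        rw [show 1 * B 0 1 ⊔ 0 = 1 * B 0 1 from by omega, show 1 * B 0 2 ⊔ 0 = 0 from by omega]
        linear_combination (c 0 j * B 0 2) * (hs 1 0) - (c 0 j * B 0 1) * (hs 2 0)
      · simp only [sgn, if_neg he]
        rw [show -1 * B 0 1 ⊔ 0 = 0 from by omega, show -1 * B 0 2 ⊔ 0 = -1 * B 0 2 from by omega]
        linear_combination (c 0 j * B 0 2) * (hs 1 0)
  · -- k = 1
    have hcyc2 : isCyclic (mutate B 1) := hcyc'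
    rcases hcyc with ⟨hb10, hb21, hb02⟩ | ⟨hb10, hb21, hb02⟩
    · have hb01 : B 0 1 < 0 := by nlinarith
      have hb12 : B 1 2 < 0 := by nlinarith
      have hb20 : B 2 0 < 0 := by nlinarith
      have eCh : mutate B 1 2 0 = B 2 0 + B 2 1 * B 1 0 := by
        simp only [mutate]
        rw [if_neg (by decide : ¬((2:Fin 3) = 1 ∨ (0:Fin 3) = 1))]
        rw [show B 2 1 ⊔ 0 = B 2 1 from by omega, show B 1 0 ⊔ 0 = B 1 0 from by omega,
          show -B 2 1 ⊔ 0 = 0 from by omega, show -B 1 0 ⊔ 0 = 0 from by omega]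
        ring
      have eN0 : mutate B 1 1 2 = -(B 1 2) := by simp [mutate]
      have eN1 : mutate B 1 0 1 = -(B 0 1) := by simp [mutate]
      have eM : mutate B 1 0 2 = B 0 2 - B 0 1 * B 1 2 := by
        simp only [mutate]
        rw [if_neg (by decide : ¬((0:Fin 3) = 1 ∨ (2:Fin 3) = 1))]
        rw [show B 0 1 ⊔ 0 = 0 from by omega, show B 1 2 ⊔ 0 = 0 from by omega,
          show -B 0 1 ⊔ 0 = -B 0 1 from by omega, show -B 1 2 ⊔ 0 = -B 1 2 from by omega]
        ring
      have eW : mutate B 1 1 0 = -(B 1 0) := by simp [mutate]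
      have hm : B 0 2 - B 0 1 * B 1 2 < 0 := by
        rcases hcyc2 with h | h
        · rw [eW] at h; omega
        · have := h.2.2; rw [eM] at this; exact this
      have hkey : d 2 * (B 2 0 + B 2 1 * B 1 0) = -(d 0 * (B 0 2 - B 0 1 * B 1 2)) := by
        linear_combination hs 2 0 + B 1 0 * hs 2 1 - B 1 2 * hs 0 1
      have key : 0 < B 2 0 + B 2 1 * B 1 0 := by nlinarith [hkey, mul_pos hd0 (show 0 < -(B 0 2 - B 0 1 * B 1 2) from by linarith), hd2]
      funext j
      simp only [ucyc, cmut, Fin.sum_univ_three, Matrix.cons_val_zero, Matrix.cons_val_one,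
        Matrix.head_cons, Matrix.cons_val_two, Matrix.tail_cons, eCh, eN0, eN1,
        Pi.add_apply, Pi.smul_apply, Pi.neg_apply, smul_eq_mul,
        show (((0:Fin 3) = (1:Fin 3))) = False from by simp, show (((1:Fin 3) = (1:Fin 3))) = True from by simp, show (((2:Fin 3) = (1:Fin 3))) = False from by simp, if_true, if_false]
      rw [abs_neg, abs_neg, abs_of_pos key, abs_of_neg hb12, abs_of_neg hb20, abs_of_neg hb01]
      by_cases he : ∀ j, 0 ≤ c 1 j
      · simp only [sgn, if_pos he]
        rw [show 1 * B 1 2 ⊔ 0 = 0 from by omega, show 1 * B 1 0 ⊔ 0 = 1 * B 1 0 from by omega]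
        linear_combination (c 1 j * B 1 0) * (hs 2 1)
      · simp only [sgn, if_neg he]
        rw [show -1 * B 1 2 ⊔ 0 = -1 * B 1 2 from by omega, show -1 * B 1 0 ⊔ 0 = 0 from by omega]
        linear_combination (c 1 j * B 1 0) * (hs 2 1) - (c 1 j * B 1 2) * (hs 0 1)
    · have hb01 : 0 < B 0 1 := by nlinarith
      have hb12 : 0 < B 1 2 := by nlinarith
      have hb20 : 0 < B 2 0 := by nlinarith
      have eCh : mutate B 1 2 0 = B 2 0 - B 2 1 * B 1 0 := by
        simp only [mutate]
        rw [if_neg (by decide : ¬((2:Fin 3) = 1 ∨ (0:Fin 3) = 1))]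
        rw [show B 2 1 ⊔ 0 = 0 from by omega, show B 1 0 ⊔ 0 = 0 from by omega,
          show -B 2 1 ⊔ 0 = -B 2 1 from by omega, show -B 1 0 ⊔ 0 = -B 1 0 from by omega]
        ring
      have eN0 : mutate B 1 1 2 = -(B 1 2) := by simp [mutate]
      have eN1 : mutate B 1 0 1 = -(B 0 1) := by simp [mutate]
      have eM : mutate B 1 0 2 = B 0 2 + B 0 1 * B 1 2 := by
        simp only [mutate]
        rw [if_neg (by decide : ¬((0:Fin 3) = 1 ∨ (2:Fin 3) = 1))]
        rw [show B 0 1 ⊔ 0 = B 0 1 from by omega, show B 1 2 ⊔ 0 = B 1 2 from by omega,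
          show -B 0 1 ⊔ 0 = 0 from by omega, show -B 1 2 ⊔ 0 = 0 from by omega]
        ring
      have eW : mutate B 1 1 0 = -(B 1 0) := by simp [mutate]
      have hm : 0 < B 0 2 + B 0 1 * B 1 2 := by
        rcases hcyc2 with h | h
        · have := h.2.2; rw [eM] at this; exact this
        · rw [eW] at h; omega
      have hkey : d 2 * (B 2 0 - B 2 1 * B 1 0) = -(d 0 * (B 0 2 + B 0 1 * B 1 2)) := by
        linear_combination hs 2 0 - B 1 0 * hs 2 1 + B 1 2 * hs 0 1
      have key : B 2 0 - B 2 1 * B 1 0 < 0 := by nlinarith [hkey, mul_pos hd0 hm, hd2]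
      funext j
      simp only [ucyc, cmut, Fin.sum_univ_three, Matrix.cons_val_zero, Matrix.cons_val_one,
        Matrix.head_cons, Matrix.cons_val_two, Matrix.tail_cons, eCh, eN0, eN1,
        Pi.add_apply, Pi.smul_apply, Pi.neg_apply, smul_eq_mul,
        show (((0:Fin 3) = (1:Fin 3))) = False from by simp, show (((1:Fin 3) = (1:Fin 3))) = True from by simp, show (((2:Fin 3) = (1:Fin 3))) = False from by simp, if_true, if_false]
      rw [abs_neg, abs_neg, abs_of_neg key, abs_of_pos hb12, abs_of_pos hb20, abs_of_pos hb01]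
      by_cases he : ∀ j, 0 ≤ c 1 j
      · simp only [sgn, if_pos he]
        rw [show 1 * B 1 2 ⊔ 0 = 1 * B 1 2 from by omega, show 1 * B 1 0 ⊔ 0 = 0 from by omega]
        linear_combination (c 1 j * B 1 0) * (hs 2 1) - (c 1 j * B 1 2) * (hs 0 1)
      · simp only [sgn, if_neg he]
        rw [show -1 * B 1 2 ⊔ 0 = 0 from by omega, show -1 * B 1 0 ⊔ 0 = -1 * B 1 0 from by omega]
        linear_combination (c 1 j * B 1 0) * (hs 2 1)
  · -- k = 2
    have hcyc2 : isCyclic (mutate B 2) := hcyc'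
    rcases hcyc with ⟨hb10, hb21, hb02⟩ | ⟨hb10, hb21, hb02⟩
    · have hb01 : B 0 1 < 0 := by nlinarith
      have hb12 : B 1 2 < 0 := by nlinarith
      have hb20 : B 2 0 < 0 := by nlinarith
      have eCh : mutate B 2 0 1 = B 0 1 + B 0 2 * B 2 1 := by
        simp only [mutate]
        rw [if_neg (by decide : ¬((0:Fin 3) = 2 ∨ (1:Fin 3) = 2))]
        rw [show B 0 2 ⊔ 0 = B 0 2 from by omega, show B 2 1 ⊔ 0 = B 2 1 from by omega,
          show -B 0 2 ⊔ 0 = 0 from by omega, show -B 2 1 ⊔ 0 = 0 from by omega]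
        ring
      have eN0 : mutate B 2 1 2 = -(B 1 2) := by simp [mutate]
      have eN1 : mutate B 2 2 0 = -(B 2 0) := by simp [mutate]
      have eM : mutate B 2 1 0 = B 1 0 - B 1 2 * B 2 0 := by
        simp only [mutate]
        rw [if_neg (by decide : ¬((1:Fin 3) = 2 ∨ (0:Fin 3) = 2))]
        rw [show B 1 2 ⊔ 0 = 0 from by omega, show B 2 0 ⊔ 0 = 0 from by omega,
          show -B 1 2 ⊔ 0 = -B 1 2 from by omega, show -B 2 0 ⊔ 0 = -B 2 0 from by omega]
        ring
      have eW : mutate B 2 2 1 = -(B 2 1) := by simp [mutate]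
      have hm : B 1 0 - B 1 2 * B 2 0 < 0 := by
        rcases hcyc2 with h | h
        · rw [eW] at h; omega
        · have := h.1; rw [eM] at this; exact this
      have hkey : d 0 * (B 0 1 + B 0 2 * B 2 1) = -(d 1 * (B 1 0 - B 1 2 * B 2 0)) := by
        linear_combination hs 0 1 + B 2 1 * hs 0 2 - B 2 0 * hs 1 2
      have key : 0 < B 0 1 + B 0 2 * B 2 1 := by nlinarith [hkey, mul_pos hd1 (show 0 < -(B 1 0 - B 1 2 * B 2 0) from by linarith), hd0]
      funext j
      simp only [ucyc, cmut, Fin.sum_univ_three, Matrix.cons_val_zero, Matrix.cons_val_one,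
        Matrix.head_cons, Matrix.cons_val_two, Matrix.tail_cons, eCh, eN0, eN1,
        Pi.add_apply, Pi.smul_apply, Pi.neg_apply, smul_eq_mul,
        show (((0:Fin 3) = (2:Fin 3))) = False from by simp, show (((1:Fin 3) = (2:Fin 3))) = False from by simp, show (((2:Fin 3) = (2:Fin 3))) = True from by simp, if_true, if_false]
      rw [abs_neg, abs_neg, abs_of_pos key, abs_of_neg hb12, abs_of_neg hb20, abs_of_neg hb01]
      by_cases he : ∀ j, 0 ≤ c 2 j
      · simp only [sgn, if_pos he]
        rw [show 1 * B 2 0 ⊔ 0 = 0 from by omega, show 1 * B 2 1 ⊔ 0 = 1 * B 2 1 from by omega]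
        linear_combination (c 2 j * B 2 1) * (hs 0 2)
      · simp only [sgn, if_neg he]
        rw [show -1 * B 2 0 ⊔ 0 = -1 * B 2 0 from by omega, show -1 * B 2 1 ⊔ 0 = 0 from by omega]
        linear_combination (c 2 j * B 2 1) * (hs 0 2) - (c 2 j * B 2 0) * (hs 1 2)
    · have hb01 : 0 < B 0 1 := by nlinarith
      have hb12 : 0 < B 1 2 := by nlinarith
      have hb20 : 0 < B 2 0 := by nlinarith
      have eCh : mutate B 2 0 1 = B 0 1 - B 0 2 * B 2 1 := by
        simp only [mutate]
        rw [if_neg (by decide : ¬((0:Fin 3) = 2 ∨ (1:Fin 3) = 2))]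
        rw [show B 0 2 ⊔ 0 = 0 from by omega, show B 2 1 ⊔ 0 = 0 from by omega,
          show -B 0 2 ⊔ 0 = -B 0 2 from by omega, show -B 2 1 ⊔ 0 = -B 2 1 from by omega]
        ring
      have eN0 : mutate B 2 1 2 = -(B 1 2) := by simp [mutate]
      have eN1 : mutate B 2 2 0 = -(B 2 0) := by simp [mutate]
      have eM : mutate B 2 1 0 = B 1 0 + B 1 2 * B 2 0 := by
        simp only [mutate]
        rw [if_neg (by decide : ¬((1:Fin 3) = 2 ∨ (0:Fin 3) = 2))]
        rw [show B 1 2 ⊔ 0 = B 1 2 from by omega, show B 2 0 ⊔ 0 = B 2 0 from by omega,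
          show -B 1 2 ⊔ 0 = 0 from by omega, show -B 2 0 ⊔ 0 = 0 from by omega]
        ring
      have eW : mutate B 2 2 1 = -(B 2 1) := by simp [mutate]
      have hm : 0 < B 1 0 + B 1 2 * B 2 0 := by
        rcases hcyc2 with h | h
        · have := h.1; rw [eM] at this; exact this
        · rw [eW] at h; omega
      have hkey : d 0 * (B 0 1 - B 0 2 * B 2 1) = -(d 1 * (B 1 0 + B 1 2 * B 2 0)) := by
        linear_combination hs 0 1 - B 2 1 * hs 0 2 + B 2 0 * hs 1 2
      have key : B 0 1 - B 0 2 * B 2 1 < 0 := by nlinarith [hkey, mul_pos hd1 hm, hd0]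
      funext j
      simp only [ucyc, cmut, Fin.sum_univ_three, Matrix.cons_val_zero, Matrix.cons_val_one,
        Matrix.head_cons, Matrix.cons_val_two, Matrix.tail_cons, eCh, eN0, eN1,
        Pi.add_apply, Pi.smul_apply, Pi.neg_apply, smul_eq_mul,
        show (((0:Fin 3) = (2:Fin 3))) = False from by simp, show (((1:Fin 3) = (2:Fin 3))) = False from by simp, show (((2:Fin 3) = (2:Fin 3))) = True from by simp, if_true, if_false]
      rw [abs_neg, abs_neg, abs_of_neg key, abs_of_pos hb12, abs_of_pos hb20, abs_of_pos hb01]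
      by_cases he : ∀ j, 0 ≤ c 2 j
      · simp only [sgn, if_pos he]
        rw [show 1 * B 2 0 ⊔ 0 = 1 * B 2 0 from by omega, show 1 * B 2 1 ⊔ 0 = 0 from by omega]
        linear_combination (c 2 j * B 2 1) * (hs 0 2) - (c 2 j * B 2 0) * (hs 1 2)
      · simp only [sgn, if_neg he]
        rw [show -1 * B 2 0 ⊔ 0 = 0 from by omega, show -1 * B 2 1 ⊔ 0 = -1 * B 2 1 from by omega]
        linear_combination (c 2 j * B 2 1) * (hs 0 2)
end

section
/- Sign change of the radical coordinate under mutation from cyclic to acyclic: let (c, B) be a Y-seed with c a sign-coherent basis of Q^3, B a 3×3 skew-symmetrizable matrix with skew-symmetrizer diag(d_1,d_2,d_3) whose diagram is cyclic, and u = d_2|B_{23}|·c_1 + d_3|B_{31}|·c_2 + d_1|B_{12}|·c_3. Let (c',B') = μ_k(c,B) and suppose the diagram of B' is acyclic. Then the coordinate vector of u in the basis c' equals (d_2|B'_{23}|, d_3|B'_{31}|, d_1|B'_{12}|) with the k-th coordinate multiplied by -1. -/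
open Matrix BigOperators

lemma sgn_cases {n : ℕ} (c : Fin n → ℤ) : sgn c = 1 ∨ sgn c = -1 := by
  unfold sgn; split <;> simp

lemma key (dk da db bka bak bkb bbk bab bba e ck ca cb : ℤ)
    (hdk : 0 < dk) (hda : 0 < da) (hdb : 0 < db)
    (h1 : dk * bka = -(da * bak)) (h3 : db * bbk = -(dk * bkb))
    (h2 : da * bab = -(db * bba))
    (he : e = 1 ∨ e = -1)
    (hcyc : (0 < bak ∧ 0 < bba ∧ 0 < bkb) ∨ (bak < 0 ∧ bba < 0 ∧ bkb < 0))
    (hac : ¬((0 < -bak ∧ 0 < bba + (bbk ⊔ 0) * (bka ⊔ 0) - (-bbk ⊔ 0) * (-bka ⊔ 0) ∧ 0 < -bkb)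
        ∨ (-bak < 0 ∧ bba + (bbk ⊔ 0) * (bka ⊔ 0) - (-bbk ⊔ 0) * (-bka ⊔ 0) < 0 ∧ -bkb < 0))) :
    da * |bab| * ck + db * |bbk| * ca + dk * |bka| * cb =
      -(da * |bab + (bak ⊔ 0) * (bkb ⊔ 0) - (-bak ⊔ 0) * (-bkb ⊔ 0)|) * -ck +
        db * |bbk| * (ca + (e * bka ⊔ 0) * ck) +
        dk * |bka| * (cb + (e * bkb ⊔ 0) * ck) := by
  rcases hcyc with ⟨hbak, hbba, hbkb⟩ | ⟨hbak, hbba, hbkb⟩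
  · have hbka : bka < 0 := by nlinarith
    have hbab : bab < 0 := by nlinarith
    have hbbk : bbk < 0 := by nlinarith
    have hM : 0 ≤ bba + (bbk ⊔ 0) * (bka ⊔ 0) - (-bbk ⊔ 0) * (-bka ⊔ 0) := by
      by_contra h
      push_neg at h
      exact hac (Or.inr ⟨by omega, h, by omega⟩)
    have m1 : bak ⊔ 0 = bak := max_eq_left hbak.le
    have m2 : bkb ⊔ 0 = bkb := max_eq_left hbkb.le
    have m3 : (-bak) ⊔ 0 = 0 := max_eq_right (by omega)
    have m4 : (-bkb) ⊔ 0 = 0 := max_eq_right (by omega)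
    have m5 : bka ⊔ 0 = 0 := max_eq_right hbka.le
    have m6 : (-bka) ⊔ 0 = -bka := max_eq_left (by omega)
    have m7 : bbk ⊔ 0 = 0 := max_eq_right hbbk.le
    have m8 : (-bbk) ⊔ 0 = -bbk := max_eq_left (by omega)
    simp only [m1, m2, m3, m4, m5, m6, m7, m8, mul_zero, zero_mul, sub_zero, add_zero, neg_mul_neg] at hM ⊢
    have hM' : 0 ≤ bba - bbk * bka := by linarith
    have key2 : da * (bab + bak * bkb) = -(db * (bba - bbk * bka)) := by
      linear_combination h2 - bka * h3 + bkb * h1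
    have hB' : bab + bak * bkb ≤ 0 := by nlinarith
    rw [abs_of_neg hbab, abs_of_neg hbka, abs_of_neg hbbk, abs_of_nonpos hB']
    rcases he with rfl | rfl
    · rw [one_mul, one_mul, m5, m2]
      linear_combination bkb * ck * h1
    · rw [neg_one_mul, neg_one_mul, m6, m4]
      linear_combination bkb * ck * h1 - bka * ck * h3
  · have hbka : 0 < bka := by nlinarith
    have hbab : 0 < bab := by nlinarith
    have hbbk : 0 < bbk := by nlinarith
    have hM : bba + (bbk ⊔ 0) * (bka ⊔ 0) - (-bbk ⊔ 0) * (-bka ⊔ 0) ≤ 0 := by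
      by_contra h
      push_neg at h
      exact hac (Or.inl ⟨by omega, h, by omega⟩)
    have m1 : bak ⊔ 0 = 0 := max_eq_right hbak.le
    have m2 : bkb ⊔ 0 = 0 := max_eq_right hbkb.le
    have m3 : (-bak) ⊔ 0 = -bak := max_eq_left (by omega)
    have m4 : (-bkb) ⊔ 0 = -bkb := max_eq_left (by omega)
    have m5 : bka ⊔ 0 = bka := max_eq_left hbka.le
    have m6 : (-bka) ⊔ 0 = 0 := max_eq_right (by omega)
    have m7 : bbk ⊔ 0 = bbk := max_eq_left hbbk.le
    have m8 : (-bbk) ⊔ 0 = 0 := max_eq_right (by omega)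
    simp only [m1, m2, m3, m4, m5, m6, m7, m8, mul_zero, zero_mul, sub_zero, add_zero, neg_mul_neg] at hM ⊢
    have hM' : bba + bbk * bka ≤ 0 := by linarith
    have key2 : da * (bab - bak * bkb) = -(db * (bba + bbk * bka)) := by
      linear_combination h2 + bka * h3 - bkb * h1
    have hB' : 0 ≤ bab - bak * bkb := by nlinarith
    rw [abs_of_pos hbab, abs_of_pos hbka, abs_of_pos hbbk]
    rw [abs_of_nonneg hB']
    rcases he with rfl | rfl
    · rw [one_mul, one_mul, m5, m2]
      linear_combination bkb * ck * h1 - bka * ck * h3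
    · rw [neg_one_mul, neg_one_mul, m6, m4]
      linear_combination bkb * ck * h1

theorem radical_coords_cyclic_to_acyclic (B : Matrix (Fin 3) (Fin 3) ℤ)
    (d : Fin 3 → ℤ) (hd : skewSymmetrizer d B)
    (c : Fin 3 → Fin 3 → ℤ)
    (hbasis : LinearIndependent ℚ (fun i => fun j => (c i j : ℚ)))
    (hc : ∀ i, signCoherent (c i))
    (hcyc : isCyclic B) (k : Fin 3)
    (hacyc' : ¬ isCyclic (mutate B k)) :
    (fun j => ∑ i, ucyc B d i * c i j) =
      (fun j => ∑ i, (if i = k then -ucyc (mutate B k) d i else ucyc (mutate B k) d i) *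
        cmut B k c i j) := by
  funext j
  fin_cases k <;>
    simp only [ucyc, cmut, mutate, isCyclic, Fin.sum_univ_three, Fin.isValue,
      Matrix.cons_val_zero, Matrix.cons_val_one, Matrix.head_cons, Matrix.cons_val_two,
      Matrix.tail_cons, Fin.zero_eta, Fin.mk_one, Fin.reduceFinMk, Fin.reduceEq,
      false_or, or_true, true_or, or_false, or_self, if_true, if_false, abs_neg,
      Pi.smul_apply, smul_eq_mul, Pi.neg_apply, Pi.add_apply, reduceIte] at hacyc' ⊢
  · linear_combination key (d 0) (d 1) (d 2) (B 0 1) (B 1 0) (B 0 2) (B 2 0) (B 1 2) (B 2 1)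
      (sgn (c 0)) (c 0 j) (c 1 j) (c 2 j) (hd.1 0) (hd.1 1) (hd.1 2)
      (hd.2 0 1) (hd.2 2 0) (hd.2 1 2) (sgn_cases (c 0)) hcyc hacyc'
  · linear_combination key (d 1) (d 2) (d 0) (B 1 2) (B 2 1) (B 1 0) (B 0 1) (B 2 0) (B 0 2)
      (sgn (c 1)) (c 1 j) (c 2 j) (c 0 j) (hd.1 1) (hd.1 2) (hd.1 0)
      (hd.2 1 2) (hd.2 0 1) (hd.2 2 0) (sgn_cases (c 1))
      (hcyc.imp (fun ⟨x, y, z⟩ => ⟨y, z, x⟩) (fun ⟨x, y, z⟩ => ⟨y, z, x⟩))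
      (fun h => hacyc' (h.imp (fun ⟨x, y, z⟩ => ⟨z, x, y⟩) (fun ⟨x, y, z⟩ => ⟨z, x, y⟩)))
  · linear_combination key (d 2) (d 0) (d 1) (B 2 0) (B 0 2) (B 2 1) (B 1 2) (B 0 1) (B 1 0)
      (sgn (c 2)) (c 2 j) (c 0 j) (c 1 j) (hd.1 2) (hd.1 0) (hd.1 1)
      (hd.2 2 0) (hd.2 1 2) (hd.2 0 1) (sgn_cases (c 2))
      (hcyc.imp (fun ⟨x, y, z⟩ => ⟨z, x, y⟩) (fun ⟨x, y, z⟩ => ⟨z, x, y⟩))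
      (fun h => hacyc' (h.imp (fun ⟨x, y, z⟩ => ⟨y, z, x⟩) (fun ⟨x, y, z⟩ => ⟨y, z, x⟩)))
end

section
/- Key matrix identity for cyclic-to-cyclic mutation: let B be a 3×3 skew-symmetrizable matrix whose diagram is cyclic, let {i,j,k} = {1,2,3}, and let B' = μ_k(B). If the diagram of B' is also cyclic, then |B'_{ij}| = -|B_{ij}| + |B_{ik}|·|B_{kj}|. -/
open Matrix BigOperators

lemma keysign (d0 d1 d2 b01 b10 b12 b21 b20 b02 : ℤ)
    (hd0 : 0 < d0) (hd1 : 0 < d1) (hd2 : 0 < d2)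
    (h01 : d0 * b01 = -(d1 * b10)) (h12 : d1 * b12 = -(d2 * b21))
    (h20 : d2 * b20 = -(d0 * b02))
    (h' : b10 - b12 * b20 < 0) : 0 < b01 + b02 * b21 := by
  have heq : d0 * (b01 + b02 * b21) = d1 * (b12 * b20 - b10) := by
    linear_combination h01 + b21 * h20 - b20 * h12
  nlinarith [mul_pos hd1 (show (0:ℤ) < b12 * b20 - b10 by linarith)]

lemma master1pos (d0 d1 d2 b01 b10 b12 b21 b20 b02 : ℤ)
    (hd0 : 0 < d0) (hd1 : 0 < d1) (hd2 : 0 < d2)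
    (h01 : d0 * b01 = -(d1 * b10)) (h12 : d1 * b12 = -(d2 * b21))
    (h20 : d2 * b20 = -(d0 * b02))
    (h1 : 0 < b10) (h2 : 0 < b21) (h3 : 0 < b02)
    (hM : b10 + max b12 0 * max b20 0 - max (-b12) 0 * max (-b20) 0 < 0) :
    |b01 + max b02 0 * max b21 0 - max (-b02) 0 * max (-b21) 0| = -|b01| + |b02| * |b21| := by
  have n01 : b01 < 0 := by nlinarith [mul_pos hd1 h1]
  have n12 : b12 < 0 := by nlinarith [mul_pos hd2 h2]
  have n20 : b20 < 0 := by nlinarith [mul_pos hd0 h3]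
  rw [max_eq_right n12.le, max_eq_right n20.le, max_eq_left (neg_nonneg.mpr n12.le),
    max_eq_left (neg_nonneg.mpr n20.le)] at hM
  have h' : b10 - b12 * b20 < 0 := by nlinarith [hM]
  have hs := keysign d0 d1 d2 b01 b10 b12 b21 b20 b02 hd0 hd1 hd2 h01 h12 h20 h'
  rw [max_eq_left h3.le, max_eq_left h2.le, max_eq_right (neg_nonpos.mpr h3.le),
    max_eq_right (neg_nonpos.mpr h2.le),
    show b01 + b02 * b21 - 0 * 0 = b01 + b02 * b21 by ring,
    abs_of_pos hs, abs_of_neg n01, abs_of_pos h3, abs_of_pos h2]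
  ring

lemma master1neg (d0 d1 d2 b01 b10 b12 b21 b20 b02 : ℤ)
    (hd0 : 0 < d0) (hd1 : 0 < d1) (hd2 : 0 < d2)
    (h01 : d0 * b01 = -(d1 * b10)) (h12 : d1 * b12 = -(d2 * b21))
    (h20 : d2 * b20 = -(d0 * b02))
    (h1 : b10 < 0) (h2 : b21 < 0) (h3 : b02 < 0)
    (hM : 0 < b10 + max b12 0 * max b20 0 - max (-b12) 0 * max (-b20) 0) :
    |b01 + max b02 0 * max b21 0 - max (-b02) 0 * max (-b21) 0| = -|b01| + |b02| * |b21| := by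
  have p01 : 0 < b01 := by nlinarith [mul_pos hd1 (show (0:ℤ) < -b10 by linarith)]
  have p12 : 0 < b12 := by nlinarith [mul_pos hd2 (show (0:ℤ) < -b21 by linarith)]
  have p20 : 0 < b20 := by nlinarith [mul_pos hd0 (show (0:ℤ) < -b02 by linarith)]
  rw [max_eq_left p12.le, max_eq_left p20.le, max_eq_right (neg_nonpos.mpr p12.le),
    max_eq_right (neg_nonpos.mpr p20.le)] at hM
  have h' : -b10 - -b12 * -b20 < 0 := by nlinarith [hM]
  have hs := keysign d0 d1 d2 (-b01) (-b10) (-b12) (-b21) (-b20) (-b02) hd0 hd1 hd2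
    (by linear_combination -h01) (by linear_combination -h12) (by linear_combination -h20) h'
  rw [max_eq_right h3.le, max_eq_right h2.le, max_eq_left (neg_nonneg.mpr h3.le),
    max_eq_left (neg_nonneg.mpr h2.le),
    show b01 + 0 * 0 - -b02 * -b21 = b01 - b02 * b21 by ring,
    abs_of_neg (show b01 - b02 * b21 < 0 by nlinarith [hs]),
    abs_of_pos p01, abs_of_neg h3, abs_of_neg h2]
  ring

lemma master2pos (d0 d1 d2 b01 b10 b12 b21 b20 b02 : ℤ)
    (hd0 : 0 < d0) (hd1 : 0 < d1) (hd2 : 0 < d2)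
    (h01 : d0 * b01 = -(d1 * b10)) (h12 : d1 * b12 = -(d2 * b21))
    (h20 : d2 * b20 = -(d0 * b02))
    (h1 : 0 < b10) (h2 : 0 < b21) (h3 : 0 < b02)
    (hM : b10 + max b12 0 * max b20 0 - max (-b12) 0 * max (-b20) 0 < 0) :
    |b10 + max b12 0 * max b20 0 - max (-b12) 0 * max (-b20) 0| = -|b10| + |b12| * |b20| := by
  have n12 : b12 < 0 := by nlinarith [mul_pos hd2 h2]
  have n20 : b20 < 0 := by nlinarith [mul_pos hd0 h3]
  rw [abs_of_neg hM, max_eq_right n12.le, max_eq_right n20.le,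
    max_eq_left (neg_nonneg.mpr n12.le), max_eq_left (neg_nonneg.mpr n20.le),
    abs_of_pos h1, abs_of_neg n12, abs_of_neg n20]
  ring

lemma master2neg (d0 d1 d2 b01 b10 b12 b21 b20 b02 : ℤ)
    (hd0 : 0 < d0) (hd1 : 0 < d1) (hd2 : 0 < d2)
    (h01 : d0 * b01 = -(d1 * b10)) (h12 : d1 * b12 = -(d2 * b21))
    (h20 : d2 * b20 = -(d0 * b02))
    (h1 : b10 < 0) (h2 : b21 < 0) (h3 : b02 < 0)
    (hM : 0 < b10 + max b12 0 * max b20 0 - max (-b12) 0 * max (-b20) 0) :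
    |b10 + max b12 0 * max b20 0 - max (-b12) 0 * max (-b20) 0| = -|b10| + |b12| * |b20| := by
  have p12 : 0 < b12 := by nlinarith [mul_pos hd2 (show (0:ℤ) < -b21 by linarith)]
  have p20 : 0 < b20 := by nlinarith [mul_pos hd0 (show (0:ℤ) < -b02 by linarith)]
  rw [abs_of_pos hM, max_eq_left p12.le, max_eq_left p20.le,
    max_eq_right (neg_nonpos.mpr p12.le), max_eq_right (neg_nonpos.mpr p20.le),
    abs_of_neg h1, abs_of_pos p12, abs_of_pos p20]
  ring

theorem abs_entry_cyclic_to_cyclic (B : Matrix (Fin 3) (Fin 3) ℤ)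
    (hB : ∃ d : Fin 3 → ℤ, skewSymmetrizer d B)
    (hcyc : isCyclic B) (i j k : Fin 3)
    (hij : i ≠ j) (hjk : j ≠ k) (hik : i ≠ k)
    (hcyc' : isCyclic (mutate B k)) :
    |mutate B k i j| = -|B i j| + |B i k| * |B k j| := by
  obtain ⟨d, hdpos, hds⟩ := hB
  have hd0 := hdpos 0; have hd1 := hdpos 1; have hd2 := hdpos 2
  have e01 := hds 0 1; have e12 := hds 1 2; have e20 := hds 2 0
  fin_cases i <;> fin_cases j <;> fin_cases k <;> try simp at hij hjk hik
  -- case (0,1,2)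
  · rcases hcyc with ⟨h1, h2, h3⟩ | ⟨h1, h2, h3⟩
    · rcases hcyc' with ⟨c1, c2, c3⟩ | ⟨c1, c2, c3⟩
      · have c2' : (0:ℤ) < -B 2 1 := c2; linarith
      · have c1' : B 1 0 + max (B 1 2) 0 * max (B 2 0) 0
            - max (-B 1 2) 0 * max (-B 2 0) 0 < 0 := c1
        exact master1pos (d 0) (d 1) (d 2) (B 0 1) (B 1 0) (B 1 2) (B 2 1) (B 2 0) (B 0 2)
          hd0 hd1 hd2 e01 e12 e20 h1 h2 h3 c1'
    · rcases hcyc' with ⟨c1, c2, c3⟩ | ⟨c1, c2, c3⟩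
      · have c1' : (0:ℤ) < B 1 0 + max (B 1 2) 0 * max (B 2 0) 0
            - max (-B 1 2) 0 * max (-B 2 0) 0 := c1
        exact master1neg (d 0) (d 1) (d 2) (B 0 1) (B 1 0) (B 1 2) (B 2 1) (B 2 0) (B 0 2)
          hd0 hd1 hd2 e01 e12 e20 h1 h2 h3 c1'
      · have c2' : -B 2 1 < (0:ℤ) := c2; linarith
  -- case (0,2,1)
  · rcases hcyc with ⟨h1, h2, h3⟩ | ⟨h1, h2, h3⟩
    · rcases hcyc' with ⟨c1, c2, c3⟩ | ⟨c1, c2, c3⟩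
      · have c1' : (0:ℤ) < -B 1 0 := c1; linarith
      · have c3' : B 0 2 + max (B 0 1) 0 * max (B 1 2) 0
            - max (-B 0 1) 0 * max (-B 1 2) 0 < 0 := c3
        exact master2pos (d 2) (d 0) (d 1) (B 2 0) (B 0 2) (B 0 1) (B 1 0) (B 1 2) (B 2 1)
          hd2 hd0 hd1 e20 e01 e12 h3 h1 h2 c3'
    · rcases hcyc' with ⟨c1, c2, c3⟩ | ⟨c1, c2, c3⟩
      · have c3' : (0:ℤ) < B 0 2 + max (B 0 1) 0 * max (B 1 2) 0
            - max (-B 0 1) 0 * max (-B 1 2) 0 := c3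
        exact master2neg (d 2) (d 0) (d 1) (B 2 0) (B 0 2) (B 0 1) (B 1 0) (B 1 2) (B 2 1)
          hd2 hd0 hd1 e20 e01 e12 h3 h1 h2 c3'
      · have c1' : -B 1 0 < (0:ℤ) := c1; linarith
  -- case (1,0,2)
  · rcases hcyc with ⟨h1, h2, h3⟩ | ⟨h1, h2, h3⟩
    · rcases hcyc' with ⟨c1, c2, c3⟩ | ⟨c1, c2, c3⟩
      · have c2' : (0:ℤ) < -B 2 1 := c2; linarith
      · have c1' : B 1 0 + max (B 1 2) 0 * max (B 2 0) 0
            - max (-B 1 2) 0 * max (-B 2 0) 0 < 0 := c1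
        exact master2pos (d 0) (d 1) (d 2) (B 0 1) (B 1 0) (B 1 2) (B 2 1) (B 2 0) (B 0 2)
          hd0 hd1 hd2 e01 e12 e20 h1 h2 h3 c1'
    · rcases hcyc' with ⟨c1, c2, c3⟩ | ⟨c1, c2, c3⟩
      · have c1' : (0:ℤ) < B 1 0 + max (B 1 2) 0 * max (B 2 0) 0
            - max (-B 1 2) 0 * max (-B 2 0) 0 := c1
        exact master2neg (d 0) (d 1) (d 2) (B 0 1) (B 1 0) (B 1 2) (B 2 1) (B 2 0) (B 0 2)
          hd0 hd1 hd2 e01 e12 e20 h1 h2 h3 c1'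
      · have c2' : -B 2 1 < (0:ℤ) := c2; linarith
  -- case (1,2,0)
  · rcases hcyc with ⟨h1, h2, h3⟩ | ⟨h1, h2, h3⟩
    · rcases hcyc' with ⟨c1, c2, c3⟩ | ⟨c1, c2, c3⟩
      · have c1' : (0:ℤ) < -B 1 0 := c1; linarith
      · have c2' : B 2 1 + max (B 2 0) 0 * max (B 0 1) 0
            - max (-B 2 0) 0 * max (-B 0 1) 0 < 0 := c2
        exact master1pos (d 1) (d 2) (d 0) (B 1 2) (B 2 1) (B 2 0) (B 0 2) (B 0 1) (B 1 0)
          hd1 hd2 hd0 e12 e20 e01 h2 h3 h1 c2'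
    · rcases hcyc' with ⟨c1, c2, c3⟩ | ⟨c1, c2, c3⟩
      · have c2' : (0:ℤ) < B 2 1 + max (B 2 0) 0 * max (B 0 1) 0
            - max (-B 2 0) 0 * max (-B 0 1) 0 := c2
        exact master1neg (d 1) (d 2) (d 0) (B 1 2) (B 2 1) (B 2 0) (B 0 2) (B 0 1) (B 1 0)
          hd1 hd2 hd0 e12 e20 e01 h2 h3 h1 c2'
      · have c1' : -B 1 0 < (0:ℤ) := c1; linarith
  -- case (2,0,1)
  · rcases hcyc with ⟨h1, h2, h3⟩ | ⟨h1, h2, h3⟩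
    · rcases hcyc' with ⟨c1, c2, c3⟩ | ⟨c1, c2, c3⟩
      · have c1' : (0:ℤ) < -B 1 0 := c1; linarith
      · have c3' : B 0 2 + max (B 0 1) 0 * max (B 1 2) 0
            - max (-B 0 1) 0 * max (-B 1 2) 0 < 0 := c3
        exact master1pos (d 2) (d 0) (d 1) (B 2 0) (B 0 2) (B 0 1) (B 1 0) (B 1 2) (B 2 1)
          hd2 hd0 hd1 e20 e01 e12 h3 h1 h2 c3'
    · rcases hcyc' with ⟨c1, c2, c3⟩ | ⟨c1, c2, c3⟩
      · have c3' : (0:ℤ) < B 0 2 + max (B 0 1) 0 * max (B 1 2) 0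
            - max (-B 0 1) 0 * max (-B 1 2) 0 := c3
        exact master1neg (d 2) (d 0) (d 1) (B 2 0) (B 0 2) (B 0 1) (B 1 0) (B 1 2) (B 2 1)
          hd2 hd0 hd1 e20 e01 e12 h3 h1 h2 c3'
      · have c1' : -B 1 0 < (0:ℤ) := c1; linarith
  -- case (2,1,0)
  · rcases hcyc with ⟨h1, h2, h3⟩ | ⟨h1, h2, h3⟩
    · rcases hcyc' with ⟨c1, c2, c3⟩ | ⟨c1, c2, c3⟩
      · have c1' : (0:ℤ) < -B 1 0 := c1; linarith
      · have c2' : B 2 1 + max (B 2 0) 0 * max (B 0 1) 0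
            - max (-B 2 0) 0 * max (-B 0 1) 0 < 0 := c2
        exact master2pos (d 1) (d 2) (d 0) (B 1 2) (B 2 1) (B 2 0) (B 0 2) (B 0 1) (B 1 0)
          hd1 hd2 hd0 e12 e20 e01 h2 h3 h1 c2'
    · rcases hcyc' with ⟨c1, c2, c3⟩ | ⟨c1, c2, c3⟩
      · have c2' : (0:ℤ) < B 2 1 + max (B 2 0) 0 * max (B 0 1) 0
            - max (-B 2 0) 0 * max (-B 0 1) 0 := c2
        exact master2neg (d 1) (d 2) (d 0) (B 1 2) (B 2 1) (B 2 0) (B 0 2) (B 0 1) (B 1 0)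
          hd1 hd2 hd0 e12 e20 e01 h2 h3 h1 c2'
      · have c1' : -B 1 0 < (0:ℤ) := c1; linarith
end

section
/- Key matrix identity for cyclic-to-acyclic mutation: let B be a 3×3 skew-symmetrizable matrix whose diagram is cyclic, let {i,j,k} = {1,2,3}, and let B' = μ_k(B). If the diagram of B' is acyclic, then |B'_{ij}| = |B_{ij}| - |B_{ik}|·|B_{kj}| (equivalently, -|B'_{ij}| = -|B_{ij}| + |B_{ik}||B_{kj}|). -/
open Matrix BigOperators

lemma opp_neg' {da db x y : ℤ} (hda : 0 < da) (hdb : 0 < db)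
    (h : da * x = -(db * y)) (hy : 0 < y) : x < 0 := by
  nlinarith [mul_pos hdb hy]

lemma opp_pos' {da db x y : ℤ} (hda : 0 < da) (hdb : 0 < db)
    (h : da * x = -(db * y)) (hy : y < 0) : 0 < x := by
  nlinarith [mul_pos hdb (neg_pos.2 hy)]

lemma key_mut {di dj dk p q r s t u : ℤ} (hdi : 0 < di) (hdj : 0 < dj) (hdk : 0 < dk)
    (h1 : di * p = -(dj * q)) (h2 : di * r = -(dk * s)) (h3 : dk * t = -(dj * u))
    (hcyc : ((0 < q ∧ 0 < t ∧ 0 < r) ∨ (q < 0 ∧ t < 0 ∧ r < 0)) ∨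
            ((0 < p ∧ 0 < s ∧ 0 < u) ∨ (p < 0 ∧ s < 0 ∧ u < 0)))
    (hac : ¬((0 < q + max u 0 * max s 0 - max (-u) 0 * max (-s) 0 ∧ 0 < -t ∧ 0 < -r) ∨
             (q + max u 0 * max s 0 - max (-u) 0 * max (-s) 0 < 0 ∧ -t < 0 ∧ -r < 0)) ∨
           ¬((0 < p + max r 0 * max t 0 - max (-r) 0 * max (-t) 0 ∧ 0 < -s ∧ 0 < -u) ∨
             (p + max r 0 * max t 0 - max (-r) 0 * max (-t) 0 < 0 ∧ -s < 0 ∧ -u < 0))) :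
    |p + max r 0 * max t 0 - max (-r) 0 * max (-t) 0| = |p| - |r| * |t| := by
  have h1' : dj * q = -(di * p) := by linarith
  have h2' : dk * s = -(di * r) := by linarith
  have h3' : dj * u = -(dk * t) := by linarith
  have hsigns : (0 < q ∧ 0 < t ∧ 0 < r ∧ p < 0 ∧ s < 0 ∧ u < 0) ∨
      (q < 0 ∧ t < 0 ∧ r < 0 ∧ 0 < p ∧ 0 < s ∧ 0 < u) := by
    rcases hcyc with (⟨hq, ht, hr⟩ | ⟨hq, ht, hr⟩) | (⟨hp, hs, hu⟩ | ⟨hp, hs, hu⟩)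
    · exact Or.inl ⟨hq, ht, hr, opp_neg' hdi hdj h1 hq, opp_neg' hdk hdi h2' hr,
        opp_neg' hdj hdk h3' ht⟩
    · exact Or.inr ⟨hq, ht, hr, opp_pos' hdi hdj h1 hq, opp_pos' hdk hdi h2' hr,
        opp_pos' hdj hdk h3' ht⟩
    · exact Or.inr ⟨opp_neg' hdj hdi h1' hp, opp_neg' hdk hdj h3 hu, opp_neg' hdi hdk h2 hs,
        hp, hs, hu⟩
    · exact Or.inl ⟨opp_pos' hdj hdi h1' hp, opp_pos' hdk hdj h3 hu, opp_pos' hdi hdk h2 hs,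
        hp, hs, hu⟩
  have heq : di * (p + r * t) = -(dj * (q - u * s)) := by
    linear_combination h1 + t * h2 - s * h3
  rcases hsigns with ⟨hq, ht, hr, hp, hs, hu⟩ | ⟨hq, ht, hr, hp, hs, hu⟩
  · rw [max_eq_left hr.le, max_eq_left ht.le,
      max_eq_right (by linarith : -r ≤ 0), max_eq_right (by linarith : -t ≤ 0)]
    have hkey : p + r * t ≤ 0 := by
      rcases hac with hac | hac
      · rw [max_eq_right hu.le, max_eq_right hs.le,
          max_eq_left (by linarith : (0:ℤ) ≤ -u), max_eq_left (by linarith : (0:ℤ) ≤ -s)] at hac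
        have hq'' : 0 ≤ q - u * s := by
          by_contra h
          exact hac (Or.inr ⟨by linarith, by linarith, by linarith⟩)
        nlinarith [mul_nonneg hdj.le hq'']
      · rw [max_eq_left hr.le, max_eq_left ht.le,
          max_eq_right (by linarith : -r ≤ 0), max_eq_right (by linarith : -t ≤ 0)] at hac
        by_contra h
        exact hac (Or.inl ⟨by linarith, by linarith, by linarith⟩)
    rw [show p + r * t - 0 * 0 = p + r * t by ring, abs_of_nonpos hkey,
      abs_of_neg hp, abs_of_pos hr, abs_of_pos ht]
    ring
  · rw [max_eq_right hr.le, max_eq_right ht.le,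
      max_eq_left (by linarith : (0:ℤ) ≤ -r), max_eq_left (by linarith : (0:ℤ) ≤ -t)]
    have hkey : 0 ≤ p - r * t := by
      rcases hac with hac | hac
      · rw [max_eq_left hu.le, max_eq_left hs.le,
          max_eq_right (by linarith : -u ≤ 0), max_eq_right (by linarith : -s ≤ 0)] at hac
        have hq'' : q + u * s ≤ 0 := by
          by_contra h
          exact hac (Or.inl ⟨by linarith, by linarith, by linarith⟩)
        nlinarith [mul_nonneg hdj.le (by linarith : 0 ≤ -(q + u * s))]
      · rw [max_eq_right hr.le, max_eq_right ht.le,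
          max_eq_left (by linarith : (0:ℤ) ≤ -r), max_eq_left (by linarith : (0:ℤ) ≤ -t)] at hac
        by_contra h
        exact hac (Or.inr ⟨by linarith, by linarith, by linarith⟩)
    rw [show p + 0 * 0 - -r * -t = p - r * t by ring, abs_of_nonneg hkey,
      abs_of_pos hp, abs_of_neg hr, abs_of_neg ht]
    ring

set_option maxHeartbeats 1000000 in
theorem abs_entry_cyclic_to_acyclic (B : Matrix (Fin 3) (Fin 3) ℤ)
    (hB : ∃ d : Fin 3 → ℤ, skewSymmetrizer d B)
    (hcyc : isCyclic B) (i j k : Fin 3)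
    (hij : i ≠ j) (hjk : j ≠ k) (hik : i ≠ k)
    (hacyc' : ¬ isCyclic (mutate B k)) :
    |mutate B k i j| = |B i j| - |B i k| * |B k j| := by
  obtain ⟨d, hdpos, hd⟩ := hB
  unfold isCyclic at hcyc hacyc'
  have hi : i = 0 ∨ i = 1 ∨ i = 2 := by omega
  have hj : j = 0 ∨ j = 1 ∨ j = 2 := by omega
  have hk : k = 0 ∨ k = 1 ∨ k = 2 := by omega
  rcases hi with rfl | rfl | rfl <;> rcases hj with rfl | rfl | rfl <;>
      rcases hk with rfl | rfl | rfl <;>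
    first
      | exact absurd rfl hij
      | exact absurd rfl hjk
      | exact absurd rfl hik
      | skip
  · -- (0,1,2)
    rw [show mutate B 2 1 0 = B 1 0 + max (B 1 2) 0 * max (B 2 0) 0
          - max (-B 1 2) 0 * max (-B 2 0) 0 from rfl,
        show mutate B 2 2 1 = -B 2 1 from rfl,
        show mutate B 2 0 2 = -B 0 2 from rfl] at hacyc'
    rw [show mutate B 2 0 1 = B 0 1 + max (B 0 2) 0 * max (B 2 1) 0
          - max (-B 0 2) 0 * max (-B 2 1) 0 from rfl]
    exact key_mut (hdpos 0) (hdpos 1) (hdpos 2) (hd 0 1) (hd 0 2) (hd 2 1)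
      (Or.inl hcyc) (Or.inl hacyc')
  · -- (0,2,1)
    rw [show mutate B 1 0 2 = B 0 2 + max (B 0 1) 0 * max (B 1 2) 0
          - max (-B 0 1) 0 * max (-B 1 2) 0 from rfl] at hacyc' ⊢
    rw [show mutate B 1 1 0 = -B 1 0 from rfl,
        show mutate B 1 2 1 = -B 2 1 from rfl] at hacyc'
    exact key_mut (hdpos 0) (hdpos 2) (hdpos 1) (hd 0 2) (hd 0 1) (hd 1 2)
      (Or.inr (by tauto)) (Or.inr (by tauto))
  · -- (1,0,2)
    rw [show mutate B 2 1 0 = B 1 0 + max (B 1 2) 0 * max (B 2 0) 0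
          - max (-B 1 2) 0 * max (-B 2 0) 0 from rfl] at hacyc' ⊢
    rw [show mutate B 2 2 1 = -B 2 1 from rfl,
        show mutate B 2 0 2 = -B 0 2 from rfl] at hacyc'
    exact key_mut (hdpos 1) (hdpos 0) (hdpos 2) (hd 1 0) (hd 1 2) (hd 2 0)
      (Or.inr (by tauto)) (Or.inr (by tauto))
  · -- (1,2,0)
    rw [show mutate B 0 1 0 = -B 1 0 from rfl,
        show mutate B 0 2 1 = B 2 1 + max (B 2 0) 0 * max (B 0 1) 0
          - max (-B 2 0) 0 * max (-B 0 1) 0 from rfl,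
        show mutate B 0 0 2 = -B 0 2 from rfl] at hacyc'
    rw [show mutate B 0 1 2 = B 1 2 + max (B 1 0) 0 * max (B 0 2) 0
          - max (-B 1 0) 0 * max (-B 0 2) 0 from rfl]
    exact key_mut (hdpos 1) (hdpos 2) (hdpos 0) (hd 1 2) (hd 1 0) (hd 0 2)
      (Or.inl (by tauto)) (Or.inl (by tauto))
  · -- (2,0,1)
    rw [show mutate B 1 1 0 = -B 1 0 from rfl,
        show mutate B 1 2 1 = -B 2 1 from rfl,
        show mutate B 1 0 2 = B 0 2 + max (B 0 1) 0 * max (B 1 2) 0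
          - max (-B 0 1) 0 * max (-B 1 2) 0 from rfl] at hacyc'
    rw [show mutate B 1 2 0 = B 2 0 + max (B 2 1) 0 * max (B 1 0) 0
          - max (-B 2 1) 0 * max (-B 1 0) 0 from rfl]
    exact key_mut (hdpos 2) (hdpos 0) (hdpos 1) (hd 2 0) (hd 2 1) (hd 1 0)
      (Or.inl (by tauto)) (Or.inl (by tauto))
  · -- (2,1,0)
    rw [show mutate B 0 2 1 = B 2 1 + max (B 2 0) 0 * max (B 0 1) 0
          - max (-B 2 0) 0 * max (-B 0 1) 0 from rfl] at hacyc' ⊢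
    rw [show mutate B 0 1 0 = -B 1 0 from rfl,
        show mutate B 0 0 2 = -B 0 2 from rfl] at hacyc'
    exact key_mut (hdpos 2) (hdpos 1) (hdpos 0) (hd 2 1) (hd 2 0) (hd 0 1)
      (Or.inr (by tauto)) (Or.inr (by tauto))
end

section
/- Key matrix identity for acyclic-to-cyclic mutation: let B be a 3×3 skew-symmetrizable matrix whose diagram is acyclic, let k be a vertex that is neither a source nor a sink in the diagram (i.e. B_{ki} and B_{kj} have opposite signs for the other two indices i,j, and both are nonzero), and let B' = μ_k(B). Then the diagram of B' is cyclic and |B'_{ij}| = |B_{ij}| + |B_{ik}|·|B_{kj}|. -/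
open Matrix BigOperators

lemma core_mut (a a' b b' c c' : ℤ)
    (ha : 0 < a ↔ a' < 0) (ha0 : a = 0 ↔ a' = 0)
    (hb : 0 < b ↔ b' < 0) (hb0 : b = 0 ↔ b' = 0)
    (hc : 0 < c ↔ c' < 0) (hc0 : c = 0 ↔ c' = 0)
    (hopp : a * b < 0)
    (hacyc : ¬((0 < c' ∧ 0 < b ∧ 0 < a') ∨ (c' < 0 ∧ b < 0 ∧ a' < 0))) :
    (0 < a → (c + max a' 0 * max b 0 - max (-a') 0 * max (-b) 0 < 0 ∧
      0 < c' + max b' 0 * max a 0 - max (-b') 0 * max (-a) 0 ∧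
      b < 0 ∧ 0 < b' ∧ a' < 0)) ∧
    (a < 0 → (0 < c + max a' 0 * max b 0 - max (-a') 0 * max (-b) 0 ∧
      c' + max b' 0 * max a 0 - max (-b') 0 * max (-a) 0 < 0 ∧
      0 < b ∧ b' < 0 ∧ 0 < a')) ∧
    |c + max a' 0 * max b 0 - max (-a') 0 * max (-b) 0| = |c| + |a'| * |b| := by
  rcases lt_trichotomy a 0 with haneg | ha0' | hapos
  · -- a < 0, so b > 0
    have hbpos : 0 < b := by nlinarith
    have ha'pos : 0 < a' := by omega
    have hb'neg : b' < 0 := by omega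
    have hc' : c' ≤ 0 := by omega
    have hcpos : 0 ≤ c := by omega
    rw [max_eq_left ha'pos.le, max_eq_left hbpos.le,
        max_eq_right (by omega : -a' ≤ 0), max_eq_right (by omega : -b ≤ 0),
        max_eq_right hb'neg.le, max_eq_right haneg.le,
        max_eq_left (by omega : 0 ≤ -b'), max_eq_left (by omega : 0 ≤ -a)]
    have hp1 : 0 < a' * b := mul_pos ha'pos hbpos
    have hp2 : 0 < -b' * -a := mul_pos (by omega) (by omega)
    refine ⟨fun h => absurd h (by omega), fun _ => ⟨by linarith, by linarith, hbpos, hb'neg, ha'pos⟩, ?_⟩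
    rw [abs_of_pos (by linarith), abs_of_nonneg hcpos, abs_of_pos ha'pos, abs_of_pos hbpos]
    ring
  · exfalso; rw [ha0'] at hopp; simp at hopp
  · -- a > 0, so b < 0
    have hbneg : b < 0 := by nlinarith
    have ha'neg : a' < 0 := by omega
    have hb'pos : 0 < b' := by omega
    have hc' : 0 ≤ c' := by omega
    have hcneg : c ≤ 0 := by omega
    rw [max_eq_right ha'neg.le, max_eq_right hbneg.le,
        max_eq_left (by omega : 0 ≤ -a'), max_eq_left (by omega : 0 ≤ -b),
        max_eq_left hb'pos.le, max_eq_left hapos.le,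
        max_eq_right (by omega : -b' ≤ 0), max_eq_right (by omega : -a ≤ 0)]
    have hp1 : 0 < -a' * -b := mul_pos (by omega) (by omega)
    have hp2 : 0 < b' * a := mul_pos hb'pos hapos
    refine ⟨fun _ => ⟨by linarith, by linarith, hbneg, hb'pos, ha'neg⟩, fun h => absurd h (by omega), ?_⟩
    rw [abs_of_neg (by linarith), abs_of_nonpos hcneg, abs_of_neg ha'neg, abs_of_neg hbneg]
    ring

lemma mut_ne (B : Matrix (Fin 3) (Fin 3) ℤ) (k p q : Fin 3) (hp : ¬ p = k) (hq : ¬ q = k) :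
    mutate B k p q = B p q + max (B p k) 0 * max (B k q) 0 - max (-B p k) 0 * max (-B k q) 0 := by
  simp [mutate, hp, hq]

lemma mut_row (B : Matrix (Fin 3) (Fin 3) ℤ) (k q : Fin 3) : mutate B k k q = -B k q := by
  simp [mutate]

lemma mut_col (B : Matrix (Fin 3) (Fin 3) ℤ) (k p : Fin 3) : mutate B k p k = -B p k := by
  simp [mutate]

theorem abs_entry_acyclic_to_cyclic (B : Matrix (Fin 3) (Fin 3) ℤ)
    (hB : ∃ d : Fin 3 → ℤ, skewSymmetrizer d B)
    (hacyc : ¬ isCyclic B) (i j k : Fin 3)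
    (hij : i ≠ j) (hjk : j ≠ k) (hik : i ≠ k)
    (hki : B k i ≠ 0) (hkj : B k j ≠ 0)
    (hopp : B k i * B k j < 0) :
    isCyclic (mutate B k) ∧ |mutate B k i j| = |B i j| + |B i k| * |B k j| := by
  obtain ⟨d, hdpos, hskew⟩ := hB
  have key : ∀ p q : Fin 3, (0 < B p q ↔ B q p < 0) ∧ (B p q = 0 ↔ B q p = 0) := by
    intro p q
    have h := hskew p q
    have hp := hdpos p
    have hq := hdpos q
    refine ⟨⟨fun hx => ?_, fun hx => ?_⟩, ⟨fun hx => ?_, fun hx => ?_⟩⟩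
    · nlinarith
    · nlinarith
    · have h0 : d q * B q p = 0 := by rw [hx, mul_zero] at h; linarith
      rcases mul_eq_zero.mp h0 with h' | h'
      · omega
      · exact h'
    · have h0 : d p * B p q = 0 := by rw [hx, mul_zero] at h; linarith
      rcases mul_eq_zero.mp h0 with h' | h'
      · omega
      · exact h'
  clear hskew hdpos
  simp only [isCyclic] at hacyc ⊢
  fin_cases i <;> fin_cases j <;> fin_cases k <;>
    simp_all only [ne_eq, not_true_eq_false, not_false_eq_true, Fin.isValue] <;>
    [skip; skip; skip; skip; skip; skip]
  · -- i=0, j=1, k=2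
    replace hopp : B 2 0 * B 2 1 < 0 := hopp
    obtain ⟨K1, K2, K3⟩ := core_mut (B 2 0) (B 0 2) (B 2 1) (B 1 2) (B 0 1) (B 1 0)
      (key 2 0).1 (key 2 0).2 (key 2 1).1 (key 2 1).2 (key 0 1).1 (key 0 1).2 hopp
      (by obtain ⟨r1, r2⟩ := key 0 1; obtain ⟨r3, r4⟩ := key 1 2; obtain ⟨r5, r6⟩ := key 2 0; omega)
    show ((0 < mutate B 2 1 0 ∧ 0 < mutate B 2 2 1 ∧ 0 < mutate B 2 0 2) ∨
        (mutate B 2 1 0 < 0 ∧ mutate B 2 2 1 < 0 ∧ mutate B 2 0 2 < 0)) ∧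
      |mutate B 2 0 1| = |B 0 1| + |B 0 2| * |B 2 1|
    rw [mut_ne B 2 1 0 (by decide) (by decide), mut_ne B 2 0 1 (by decide) (by decide), mut_row B 2 1, mut_col B 2 0]
    refine ⟨?_, K3⟩
    rcases lt_trichotomy (B 2 0) 0 with h | h | h
    · obtain ⟨f1, f2, f3, f4, f5⟩ := K2 h
      first
      | exact Or.inl ⟨by linarith, by linarith, by linarith⟩
      | exact Or.inr ⟨by linarith, by linarith, by linarith⟩
    · exfalso; rw [h, zero_mul] at hopp; exact lt_irrefl 0 hopp
    · obtain ⟨f1, f2, f3, f4, f5⟩ := K1 h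
      first
      | exact Or.inl ⟨by linarith, by linarith, by linarith⟩
      | exact Or.inr ⟨by linarith, by linarith, by linarith⟩
  · -- i=0, j=2, k=1
    replace hopp : B 1 0 * B 1 2 < 0 := hopp
    obtain ⟨K1, K2, K3⟩ := core_mut (B 1 0) (B 0 1) (B 1 2) (B 2 1) (B 0 2) (B 2 0)
      (key 1 0).1 (key 1 0).2 (key 1 2).1 (key 1 2).2 (key 0 2).1 (key 0 2).2 hopp
      (by obtain ⟨r1, r2⟩ := key 0 1; obtain ⟨r3, r4⟩ := key 1 2; obtain ⟨r5, r6⟩ := key 2 0; omega)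
    show ((0 < mutate B 1 1 0 ∧ 0 < mutate B 1 2 1 ∧ 0 < mutate B 1 0 2) ∨
        (mutate B 1 1 0 < 0 ∧ mutate B 1 2 1 < 0 ∧ mutate B 1 0 2 < 0)) ∧
      |mutate B 1 0 2| = |B 0 2| + |B 0 1| * |B 1 2|
    rw [mut_ne B 1 0 2 (by decide) (by decide), mut_row B 1 0, mut_col B 1 2]
    refine ⟨?_, K3⟩
    rcases lt_trichotomy (B 1 0) 0 with h | h | h
    · obtain ⟨f1, f2, f3, f4, f5⟩ := K2 h
      first
      | exact Or.inl ⟨by linarith, by linarith, by linarith⟩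
      | exact Or.inr ⟨by linarith, by linarith, by linarith⟩
    · exfalso; rw [h, zero_mul] at hopp; exact lt_irrefl 0 hopp
    · obtain ⟨f1, f2, f3, f4, f5⟩ := K1 h
      first
      | exact Or.inl ⟨by linarith, by linarith, by linarith⟩
      | exact Or.inr ⟨by linarith, by linarith, by linarith⟩
  · -- i=1, j=0, k=2
    replace hopp : B 2 1 * B 2 0 < 0 := hopp
    obtain ⟨K1, K2, K3⟩ := core_mut (B 2 1) (B 1 2) (B 2 0) (B 0 2) (B 1 0) (B 0 1)
      (key 2 1).1 (key 2 1).2 (key 2 0).1 (key 2 0).2 (key 1 0).1 (key 1 0).2 hopp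
      (by obtain ⟨r1, r2⟩ := key 0 1; obtain ⟨r3, r4⟩ := key 1 2; obtain ⟨r5, r6⟩ := key 2 0; omega)
    show ((0 < mutate B 2 1 0 ∧ 0 < mutate B 2 2 1 ∧ 0 < mutate B 2 0 2) ∨
        (mutate B 2 1 0 < 0 ∧ mutate B 2 2 1 < 0 ∧ mutate B 2 0 2 < 0)) ∧
      |mutate B 2 1 0| = |B 1 0| + |B 1 2| * |B 2 0|
    rw [mut_ne B 2 1 0 (by decide) (by decide), mut_row B 2 1, mut_col B 2 0]
    refine ⟨?_, K3⟩
    rcases lt_trichotomy (B 2 1) 0 with h | h | h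
    · obtain ⟨f1, f2, f3, f4, f5⟩ := K2 h
      first
      | exact Or.inl ⟨by linarith, by linarith, by linarith⟩
      | exact Or.inr ⟨by linarith, by linarith, by linarith⟩
    · exfalso; rw [h, zero_mul] at hopp; exact lt_irrefl 0 hopp
    · obtain ⟨f1, f2, f3, f4, f5⟩ := K1 h
      first
      | exact Or.inl ⟨by linarith, by linarith, by linarith⟩
      | exact Or.inr ⟨by linarith, by linarith, by linarith⟩
  · -- i=1, j=2, k=0
    replace hopp : B 0 1 * B 0 2 < 0 := hopp
    obtain ⟨K1, K2, K3⟩ := core_mut (B 0 1) (B 1 0) (B 0 2) (B 2 0) (B 1 2) (B 2 1)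
      (key 0 1).1 (key 0 1).2 (key 0 2).1 (key 0 2).2 (key 1 2).1 (key 1 2).2 hopp
      (by obtain ⟨r1, r2⟩ := key 0 1; obtain ⟨r3, r4⟩ := key 1 2; obtain ⟨r5, r6⟩ := key 2 0; omega)
    show ((0 < mutate B 0 1 0 ∧ 0 < mutate B 0 2 1 ∧ 0 < mutate B 0 0 2) ∨
        (mutate B 0 1 0 < 0 ∧ mutate B 0 2 1 < 0 ∧ mutate B 0 0 2 < 0)) ∧
      |mutate B 0 1 2| = |B 1 2| + |B 1 0| * |B 0 2|
    rw [mut_ne B 0 2 1 (by decide) (by decide), mut_ne B 0 1 2 (by decide) (by decide), mut_row B 0 2, mut_col B 0 1]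
    refine ⟨?_, K3⟩
    rcases lt_trichotomy (B 0 1) 0 with h | h | h
    · obtain ⟨f1, f2, f3, f4, f5⟩ := K2 h
      first
      | exact Or.inl ⟨by linarith, by linarith, by linarith⟩
      | exact Or.inr ⟨by linarith, by linarith, by linarith⟩
    · exfalso; rw [h, zero_mul] at hopp; exact lt_irrefl 0 hopp
    · obtain ⟨f1, f2, f3, f4, f5⟩ := K1 h
      first
      | exact Or.inl ⟨by linarith, by linarith, by linarith⟩
      | exact Or.inr ⟨by linarith, by linarith, by linarith⟩
  · -- i=2, j=0, k=1
    replace hopp : B 1 2 * B 1 0 < 0 := hopp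
    obtain ⟨K1, K2, K3⟩ := core_mut (B 1 2) (B 2 1) (B 1 0) (B 0 1) (B 2 0) (B 0 2)
      (key 1 2).1 (key 1 2).2 (key 1 0).1 (key 1 0).2 (key 2 0).1 (key 2 0).2 hopp
      (by obtain ⟨r1, r2⟩ := key 0 1; obtain ⟨r3, r4⟩ := key 1 2; obtain ⟨r5, r6⟩ := key 2 0; omega)
    show ((0 < mutate B 1 1 0 ∧ 0 < mutate B 1 2 1 ∧ 0 < mutate B 1 0 2) ∨
        (mutate B 1 1 0 < 0 ∧ mutate B 1 2 1 < 0 ∧ mutate B 1 0 2 < 0)) ∧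
      |mutate B 1 2 0| = |B 2 0| + |B 2 1| * |B 1 0|
    rw [mut_ne B 1 0 2 (by decide) (by decide), mut_ne B 1 2 0 (by decide) (by decide), mut_row B 1 0, mut_col B 1 2]
    refine ⟨?_, K3⟩
    rcases lt_trichotomy (B 1 2) 0 with h | h | h
    · obtain ⟨f1, f2, f3, f4, f5⟩ := K2 h
      first
      | exact Or.inl ⟨by linarith, by linarith, by linarith⟩
      | exact Or.inr ⟨by linarith, by linarith, by linarith⟩
    · exfalso; rw [h, zero_mul] at hopp; exact lt_irrefl 0 hopp
    · obtain ⟨f1, f2, f3, f4, f5⟩ := K1 h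
      first
      | exact Or.inl ⟨by linarith, by linarith, by linarith⟩
      | exact Or.inr ⟨by linarith, by linarith, by linarith⟩
  · -- i=2, j=1, k=0
    replace hopp : B 0 2 * B 0 1 < 0 := hopp
    obtain ⟨K1, K2, K3⟩ := core_mut (B 0 2) (B 2 0) (B 0 1) (B 1 0) (B 2 1) (B 1 2)
      (key 0 2).1 (key 0 2).2 (key 0 1).1 (key 0 1).2 (key 2 1).1 (key 2 1).2 hopp
      (by obtain ⟨r1, r2⟩ := key 0 1; obtain ⟨r3, r4⟩ := key 1 2; obtain ⟨r5, r6⟩ := key 2 0; omega)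
    show ((0 < mutate B 0 1 0 ∧ 0 < mutate B 0 2 1 ∧ 0 < mutate B 0 0 2) ∨
        (mutate B 0 1 0 < 0 ∧ mutate B 0 2 1 < 0 ∧ mutate B 0 0 2 < 0)) ∧
      |mutate B 0 2 1| = |B 2 1| + |B 2 0| * |B 0 1|
    rw [mut_ne B 0 2 1 (by decide) (by decide), mut_row B 0 2, mut_col B 0 1]
    refine ⟨?_, K3⟩
    rcases lt_trichotomy (B 0 2) 0 with h | h | h
    · obtain ⟨f1, f2, f3, f4, f5⟩ := K2 h
      first
      | exact Or.inl ⟨by linarith, by linarith, by linarith⟩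
      | exact Or.inr ⟨by linarith, by linarith, by linarith⟩
    · exfalso; rw [h, zero_mul] at hopp; exact lt_irrefl 0 hopp
    · obtain ⟨f1, f2, f3, f4, f5⟩ := K1 h
      first
      | exact Or.inl ⟨by linarith, by linarith, by linarith⟩
      | exact Or.inr ⟨by linarith, by linarith, by linarith⟩
end

section
/- Mutation at a source or sink preserves the radical coordinates up to a sign at k: let (c,B) be a Y-seed with c a sign-coherent basis of Q^3, B a 3×3 skew-symmetrizable matrix with skew-symmetrizer diag(d_1,d_2,d_3) whose diagram is acyclic with all three edges present, and let u = a_1 c_1 + a_2 c_2 + a_3 c_3 where (a_1,a_2,a_3) = (±d_2|B_{23}|, ±d_3|B_{31}|, ±d_1|B_{12}|) with signs chosen so the coordinates corresponding to the source and sink agree and the remaining coordinate is opposite. If k is a source or a sink of the diagram and (c',B') = μ_k(c,B), then the coordinates of u in the basis c' are obtained from (a_1,a_2,a_3) by negating the k-th coordinate. -/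
open Matrix BigOperators

theorem radical_coords_source_sink_mutation (B : Matrix (Fin 3) (Fin 3) ℤ)
    (d : Fin 3 → ℤ) (hd : skewSymmetrizer d B) (hacyc : ¬ isCyclic B)
    (hedges : B 1 0 ≠ 0 ∧ B 2 1 ≠ 0 ∧ B 0 2 ≠ 0)
    (c : Fin 3 → Fin 3 → ℤ)
    (hbasis : LinearIndependent ℚ (fun i => fun j => (c i j : ℚ)))
    (hc : ∀ i, signCoherent (c i))
    (s t m : Fin 3) (hst : s ≠ t) (hsm : s ≠ m) (htm : t ≠ m)
    (hs : isSource B s) (ht : isSink B t)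
    (ε : Fin 3 → ℤ) (hε : ∀ i, ε i = 1 ∨ ε i = -1)
    (hεst : ε s = ε t) (hεm : ε m = -ε s)
    (k : Fin 3) (hk : k = s ∨ k = t) :
    (fun j => ∑ i, (ε i * ucyc B d i) * c i j) =
      (fun j => ∑ i, ((if i = k then -1 else 1) * (ε i * ucyc B d i)) *
        cmut B k c i j) := by
  obtain ⟨hdpos, hskew⟩ := hd
  have dabs : ∀ i j, d i * |B i j| = d j * |B j i| := by
    intro i j
    have h : |d i * B i j| = |d j * B j i| := by rw [hskew i j, abs_neg]
    rwa [abs_mul, abs_mul, abs_of_pos (hdpos i), abs_of_pos (hdpos j)] at h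
  have key : ∀ p q r : Fin 3, p ≠ q → p ≠ r → q ≠ r →
      ucyc B d q * |B p q| = ucyc B d r * |B p r| := by
    intro p q r hpq hpr hqr
    fin_cases p <;> fin_cases q <;> fin_cases r <;>
      simp_all only [ne_eq, Fin.zero_eta, Fin.mk_one, Fin.reduceFinMk, not_false_iff] <;>
      first
        | exact (hpq trivial).elim
        | exact (hpr trivial).elim
        | exact (hqr trivial).elim
        | (simp only [ucyc, Matrix.cons_val_zero, Matrix.cons_val_one, Matrix.head_cons,
             Matrix.cons_val_two, Matrix.tail_cons, Fin.isValue]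
           first
             | linear_combination |B 0 1| * dabs 2 0
             | linear_combination |B 0 1| * dabs 0 2
             | linear_combination |B 1 2| * dabs 1 0
             | linear_combination |B 1 2| * dabs 0 1
             | linear_combination |B 2 0| * dabs 1 2
             | linear_combination |B 2 0| * dabs 2 1)
  rcases hk with rfl | rfl
  · -- k = s (source)
    fin_cases k
    · fin_cases t
      · exact absurd rfl hst
      · fin_cases m
        · exact absurd rfl hsm
        · exact absurd rfl htm
        · simp only [Fin.zero_eta, Fin.mk_one, Fin.reduceFinMk] at hs ht hst hsm htm hεst hεm ⊢
          funext j
          have h1 : B 0 1 ≤ 0 := hs 1 (by decide)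
          have h2 : B 0 2 ≤ 0 := hs 2 (by decide)
          have hE : ε 2 = -ε 1 := by rw [hεm, hεst]
          have hkey := key 0 1 2 (by decide) (by decide) (by decide)
          simp only [cmut, sgn, Fin.sum_univ_three, Pi.add_apply, Pi.smul_apply, Pi.neg_apply,
            smul_eq_mul, Fin.reduceEq, reduceIte, if_true, reduceCtorEq]
          by_cases hh : ∀ x, 0 ≤ c 0 x
          · rw [if_pos hh,
              max_eq_right (by linarith : (1:ℤ) * B 0 1 ≤ 0),
              max_eq_right (by linarith : (1:ℤ) * B 0 2 ≤ 0)]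
            ring
          · rw [if_neg hh]
            have e1 : max (-1 * B 0 1) 0 = |B 0 1| := by
              rw [abs_of_nonpos h1, show (-1:ℤ) * B 0 1 = -B 0 1 by ring]
              exact max_eq_left (by linarith)
            have e2 : max (-1 * B 0 2) 0 = |B 0 2| := by
              rw [abs_of_nonpos h2, show (-1:ℤ) * B 0 2 = -B 0 2 by ring]
              exact max_eq_left (by linarith)
            rw [e1, e2]
            linear_combination (-(ε 1) * c 0 j) * hkey +
              (-(ucyc B d 2 * |B 0 2| * c 0 j)) * hE
      · fin_cases m
        · exact absurd rfl hsm
        · simp only [Fin.zero_eta, Fin.mk_one, Fin.reduceFinMk] at hs ht hst hsm htm hεst hεm ⊢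
          funext j
          have h1 : B 0 2 ≤ 0 := hs 2 (by decide)
          have h2 : B 0 1 ≤ 0 := hs 1 (by decide)
          have hE : ε 1 = -ε 2 := by rw [hεm, hεst]
          have hkey := key 0 2 1 (by decide) (by decide) (by decide)
          simp only [cmut, sgn, Fin.sum_univ_three, Pi.add_apply, Pi.smul_apply, Pi.neg_apply,
            smul_eq_mul, Fin.reduceEq, reduceIte, if_true, reduceCtorEq]
          by_cases hh : ∀ x, 0 ≤ c 0 x
          · rw [if_pos hh,
              max_eq_right (by linarith : (1:ℤ) * B 0 2 ≤ 0),
              max_eq_right (by linarith : (1:ℤ) * B 0 1 ≤ 0)]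
            ring
          · rw [if_neg hh]
            have e1 : max (-1 * B 0 2) 0 = |B 0 2| := by
              rw [abs_of_nonpos h1, show (-1:ℤ) * B 0 2 = -B 0 2 by ring]
              exact max_eq_left (by linarith)
            have e2 : max (-1 * B 0 1) 0 = |B 0 1| := by
              rw [abs_of_nonpos h2, show (-1:ℤ) * B 0 1 = -B 0 1 by ring]
              exact max_eq_left (by linarith)
            rw [e1, e2]
            linear_combination (-(ε 2) * c 0 j) * hkey +
              (-(ucyc B d 1 * |B 0 1| * c 0 j)) * hE
        · exact absurd rfl htm
    · fin_cases t
      · fin_cases m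
        · exact absurd rfl htm
        · exact absurd rfl hsm
        · simp only [Fin.zero_eta, Fin.mk_one, Fin.reduceFinMk] at hs ht hst hsm htm hεst hεm ⊢
          funext j
          have h1 : B 1 0 ≤ 0 := hs 0 (by decide)
          have h2 : B 1 2 ≤ 0 := hs 2 (by decide)
          have hE : ε 2 = -ε 0 := by rw [hεm, hεst]
          have hkey := key 1 0 2 (by decide) (by decide) (by decide)
          simp only [cmut, sgn, Fin.sum_univ_three, Pi.add_apply, Pi.smul_apply, Pi.neg_apply,
            smul_eq_mul, Fin.reduceEq, reduceIte, if_true, reduceCtorEq]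
          by_cases hh : ∀ x, 0 ≤ c 1 x
          · rw [if_pos hh,
              max_eq_right (by linarith : (1:ℤ) * B 1 0 ≤ 0),
              max_eq_right (by linarith : (1:ℤ) * B 1 2 ≤ 0)]
            ring
          · rw [if_neg hh]
            have e1 : max (-1 * B 1 0) 0 = |B 1 0| := by
              rw [abs_of_nonpos h1, show (-1:ℤ) * B 1 0 = -B 1 0 by ring]
              exact max_eq_left (by linarith)
            have e2 : max (-1 * B 1 2) 0 = |B 1 2| := by
              rw [abs_of_nonpos h2, show (-1:ℤ) * B 1 2 = -B 1 2 by ring]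
              exact max_eq_left (by linarith)
            rw [e1, e2]
            linear_combination (-(ε 0) * c 1 j) * hkey +
              (-(ucyc B d 2 * |B 1 2| * c 1 j)) * hE
      · exact absurd rfl hst
      · fin_cases m
        · simp only [Fin.zero_eta, Fin.mk_one, Fin.reduceFinMk] at hs ht hst hsm htm hεst hεm ⊢
          funext j
          have h1 : B 1 2 ≤ 0 := hs 2 (by decide)
          have h2 : B 1 0 ≤ 0 := hs 0 (by decide)
          have hE : ε 0 = -ε 2 := by rw [hεm, hεst]
          have hkey := key 1 2 0 (by decide) (by decide) (by decide)
          simp only [cmut, sgn, Fin.sum_univ_three, Pi.add_apply, Pi.smul_apply, Pi.neg_apply,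
            smul_eq_mul, Fin.reduceEq, reduceIte, if_true, reduceCtorEq]
          by_cases hh : ∀ x, 0 ≤ c 1 x
          · rw [if_pos hh,
              max_eq_right (by linarith : (1:ℤ) * B 1 2 ≤ 0),
              max_eq_right (by linarith : (1:ℤ) * B 1 0 ≤ 0)]
            ring
          · rw [if_neg hh]
            have e1 : max (-1 * B 1 2) 0 = |B 1 2| := by
              rw [abs_of_nonpos h1, show (-1:ℤ) * B 1 2 = -B 1 2 by ring]
              exact max_eq_left (by linarith)
            have e2 : max (-1 * B 1 0) 0 = |B 1 0| := by
              rw [abs_of_nonpos h2, show (-1:ℤ) * B 1 0 = -B 1 0 by ring]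
              exact max_eq_left (by linarith)
            rw [e1, e2]
            linear_combination (-(ε 2) * c 1 j) * hkey +
              (-(ucyc B d 0 * |B 1 0| * c 1 j)) * hE
        · exact absurd rfl hsm
        · exact absurd rfl htm
    · fin_cases t
      · fin_cases m
        · exact absurd rfl htm
        · simp only [Fin.zero_eta, Fin.mk_one, Fin.reduceFinMk] at hs ht hst hsm htm hεst hεm ⊢
          funext j
          have h1 : B 2 0 ≤ 0 := hs 0 (by decide)
          have h2 : B 2 1 ≤ 0 := hs 1 (by decide)
          have hE : ε 1 = -ε 0 := by rw [hεm, hεst]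
          have hkey := key 2 0 1 (by decide) (by decide) (by decide)
          simp only [cmut, sgn, Fin.sum_univ_three, Pi.add_apply, Pi.smul_apply, Pi.neg_apply,
            smul_eq_mul, Fin.reduceEq, reduceIte, if_true, reduceCtorEq]
          by_cases hh : ∀ x, 0 ≤ c 2 x
          · rw [if_pos hh,
              max_eq_right (by linarith : (1:ℤ) * B 2 0 ≤ 0),
              max_eq_right (by linarith : (1:ℤ) * B 2 1 ≤ 0)]
            ring
          · rw [if_neg hh]
            have e1 : max (-1 * B 2 0) 0 = |B 2 0| := by
              rw [abs_of_nonpos h1, show (-1:ℤ) * B 2 0 = -B 2 0 by ring]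
              exact max_eq_left (by linarith)
            have e2 : max (-1 * B 2 1) 0 = |B 2 1| := by
              rw [abs_of_nonpos h2, show (-1:ℤ) * B 2 1 = -B 2 1 by ring]
              exact max_eq_left (by linarith)
            rw [e1, e2]
            linear_combination (-(ε 0) * c 2 j) * hkey +
              (-(ucyc B d 1 * |B 2 1| * c 2 j)) * hE
        · exact absurd rfl hsm
      · fin_cases m
        · simp only [Fin.zero_eta, Fin.mk_one, Fin.reduceFinMk] at hs ht hst hsm htm hεst hεm ⊢
          funext j
          have h1 : B 2 1 ≤ 0 := hs 1 (by decide)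
          have h2 : B 2 0 ≤ 0 := hs 0 (by decide)
          have hE : ε 0 = -ε 1 := by rw [hεm, hεst]
          have hkey := key 2 1 0 (by decide) (by decide) (by decide)
          simp only [cmut, sgn, Fin.sum_univ_three, Pi.add_apply, Pi.smul_apply, Pi.neg_apply,
            smul_eq_mul, Fin.reduceEq, reduceIte, if_true, reduceCtorEq]
          by_cases hh : ∀ x, 0 ≤ c 2 x
          · rw [if_pos hh,
              max_eq_right (by linarith : (1:ℤ) * B 2 1 ≤ 0),
              max_eq_right (by linarith : (1:ℤ) * B 2 0 ≤ 0)]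
            ring
          · rw [if_neg hh]
            have e1 : max (-1 * B 2 1) 0 = |B 2 1| := by
              rw [abs_of_nonpos h1, show (-1:ℤ) * B 2 1 = -B 2 1 by ring]
              exact max_eq_left (by linarith)
            have e2 : max (-1 * B 2 0) 0 = |B 2 0| := by
              rw [abs_of_nonpos h2, show (-1:ℤ) * B 2 0 = -B 2 0 by ring]
              exact max_eq_left (by linarith)
            rw [e1, e2]
            linear_combination (-(ε 1) * c 2 j) * hkey +
              (-(ucyc B d 0 * |B 2 0| * c 2 j)) * hE
        · exact absurd rfl htm
        · exact absurd rfl hsm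
      · exact absurd rfl hst
  · -- k = t (sink)
    fin_cases s
    · fin_cases k
      · exact absurd rfl hst
      · fin_cases m
        · exact absurd rfl hsm
        · exact absurd rfl htm
        · simp only [Fin.zero_eta, Fin.mk_one, Fin.reduceFinMk] at hs ht hst hsm htm hεst hεm ⊢
          funext j
          have h1 : 0 ≤ B 1 0 := ht 0 (by decide)
          have h2 : 0 ≤ B 1 2 := ht 2 (by decide)
          have hE : ε 2 = -ε 0 := hεm
          have hkey := key 1 0 2 (by decide) (by decide) (by decide)
          simp only [cmut, sgn, Fin.sum_univ_three, Pi.add_apply, Pi.smul_apply, Pi.neg_apply,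
            smul_eq_mul, Fin.reduceEq, reduceIte, if_true, reduceCtorEq]
          by_cases hh : ∀ x, 0 ≤ c 1 x
          · rw [if_pos hh]
            have e1 : max (1 * B 1 0) 0 = |B 1 0| := by
              rw [abs_of_nonneg h1, show (1:ℤ) * B 1 0 = B 1 0 by ring]
              exact max_eq_left h1
            have e2 : max (1 * B 1 2) 0 = |B 1 2| := by
              rw [abs_of_nonneg h2, show (1:ℤ) * B 1 2 = B 1 2 by ring]
              exact max_eq_left h2
            rw [e1, e2]
            linear_combination (-(ε 0) * c 1 j) * hkey +
              (-(ucyc B d 2 * |B 1 2| * c 1 j)) * hE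
          · rw [if_neg hh]
            rw [max_eq_right (by linarith : (-1:ℤ) * B 1 0 ≤ 0),
                max_eq_right (by linarith : (-1:ℤ) * B 1 2 ≤ 0)]
            ring
      · fin_cases m
        · exact absurd rfl hsm
        · simp only [Fin.zero_eta, Fin.mk_one, Fin.reduceFinMk] at hs ht hst hsm htm hεst hεm ⊢
          funext j
          have h1 : 0 ≤ B 2 0 := ht 0 (by decide)
          have h2 : 0 ≤ B 2 1 := ht 1 (by decide)
          have hE : ε 1 = -ε 0 := hεm
          have hkey := key 2 0 1 (by decide) (by decide) (by decide)
          simp only [cmut, sgn, Fin.sum_univ_three, Pi.add_apply, Pi.smul_apply, Pi.neg_apply,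
            smul_eq_mul, Fin.reduceEq, reduceIte, if_true, reduceCtorEq]
          by_cases hh : ∀ x, 0 ≤ c 2 x
          · rw [if_pos hh]
            have e1 : max (1 * B 2 0) 0 = |B 2 0| := by
              rw [abs_of_nonneg h1, show (1:ℤ) * B 2 0 = B 2 0 by ring]
              exact max_eq_left h1
            have e2 : max (1 * B 2 1) 0 = |B 2 1| := by
              rw [abs_of_nonneg h2, show (1:ℤ) * B 2 1 = B 2 1 by ring]
              exact max_eq_left h2
            rw [e1, e2]
            linear_combination (-(ε 0) * c 2 j) * hkey +
              (-(ucyc B d 1 * |B 2 1| * c 2 j)) * hE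
          · rw [if_neg hh]
            rw [max_eq_right (by linarith : (-1:ℤ) * B 2 0 ≤ 0),
                max_eq_right (by linarith : (-1:ℤ) * B 2 1 ≤ 0)]
            ring
        · exact absurd rfl htm
    · fin_cases k
      · fin_cases m
        · exact absurd rfl htm
        · exact absurd rfl hsm
        · simp only [Fin.zero_eta, Fin.mk_one, Fin.reduceFinMk] at hs ht hst hsm htm hεst hεm ⊢
          funext j
          have h1 : 0 ≤ B 0 1 := ht 1 (by decide)
          have h2 : 0 ≤ B 0 2 := ht 2 (by decide)
          have hE : ε 2 = -ε 1 := hεm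
          have hkey := key 0 1 2 (by decide) (by decide) (by decide)
          simp only [cmut, sgn, Fin.sum_univ_three, Pi.add_apply, Pi.smul_apply, Pi.neg_apply,
            smul_eq_mul, Fin.reduceEq, reduceIte, if_true, reduceCtorEq]
          by_cases hh : ∀ x, 0 ≤ c 0 x
          · rw [if_pos hh]
            have e1 : max (1 * B 0 1) 0 = |B 0 1| := by
              rw [abs_of_nonneg h1, show (1:ℤ) * B 0 1 = B 0 1 by ring]
              exact max_eq_left h1
            have e2 : max (1 * B 0 2) 0 = |B 0 2| := by
              rw [abs_of_nonneg h2, show (1:ℤ) * B 0 2 = B 0 2 by ring]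
              exact max_eq_left h2
            rw [e1, e2]
            linear_combination (-(ε 1) * c 0 j) * hkey +
              (-(ucyc B d 2 * |B 0 2| * c 0 j)) * hE
          · rw [if_neg hh]
            rw [max_eq_right (by linarith : (-1:ℤ) * B 0 1 ≤ 0),
                max_eq_right (by linarith : (-1:ℤ) * B 0 2 ≤ 0)]
            ring
      · exact absurd rfl hst
      · fin_cases m
        · simp only [Fin.zero_eta, Fin.mk_one, Fin.reduceFinMk] at hs ht hst hsm htm hεst hεm ⊢
          funext j
          have h1 : 0 ≤ B 2 1 := ht 1 (by decide)
          have h2 : 0 ≤ B 2 0 := ht 0 (by decide)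
          have hE : ε 0 = -ε 1 := hεm
          have hkey := key 2 1 0 (by decide) (by decide) (by decide)
          simp only [cmut, sgn, Fin.sum_univ_three, Pi.add_apply, Pi.smul_apply, Pi.neg_apply,
            smul_eq_mul, Fin.reduceEq, reduceIte, if_true, reduceCtorEq]
          by_cases hh : ∀ x, 0 ≤ c 2 x
          · rw [if_pos hh]
            have e1 : max (1 * B 2 1) 0 = |B 2 1| := by
              rw [abs_of_nonneg h1, show (1:ℤ) * B 2 1 = B 2 1 by ring]
              exact max_eq_left h1
            have e2 : max (1 * B 2 0) 0 = |B 2 0| := by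
              rw [abs_of_nonneg h2, show (1:ℤ) * B 2 0 = B 2 0 by ring]
              exact max_eq_left h2
            rw [e1, e2]
            linear_combination (-(ε 1) * c 2 j) * hkey +
              (-(ucyc B d 0 * |B 2 0| * c 2 j)) * hE
          · rw [if_neg hh]
            rw [max_eq_right (by linarith : (-1:ℤ) * B 2 1 ≤ 0),
                max_eq_right (by linarith : (-1:ℤ) * B 2 0 ≤ 0)]
            ring
        · exact absurd rfl hsm
        · exact absurd rfl htm
    · fin_cases k
      · fin_cases m
        · exact absurd rfl htm
        · simp only [Fin.zero_eta, Fin.mk_one, Fin.reduceFinMk] at hs ht hst hsm htm hεst hεm ⊢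
          funext j
          have h1 : 0 ≤ B 0 2 := ht 2 (by decide)
          have h2 : 0 ≤ B 0 1 := ht 1 (by decide)
          have hE : ε 1 = -ε 2 := hεm
          have hkey := key 0 2 1 (by decide) (by decide) (by decide)
          simp only [cmut, sgn, Fin.sum_univ_three, Pi.add_apply, Pi.smul_apply, Pi.neg_apply,
            smul_eq_mul, Fin.reduceEq, reduceIte, if_true, reduceCtorEq]
          by_cases hh : ∀ x, 0 ≤ c 0 x
          · rw [if_pos hh]
            have e1 : max (1 * B 0 2) 0 = |B 0 2| := by
              rw [abs_of_nonneg h1, show (1:ℤ) * B 0 2 = B 0 2 by ring]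
              exact max_eq_left h1
            have e2 : max (1 * B 0 1) 0 = |B 0 1| := by
              rw [abs_of_nonneg h2, show (1:ℤ) * B 0 1 = B 0 1 by ring]
              exact max_eq_left h2
            rw [e1, e2]
            linear_combination (-(ε 2) * c 0 j) * hkey +
              (-(ucyc B d 1 * |B 0 1| * c 0 j)) * hE
          · rw [if_neg hh]
            rw [max_eq_right (by linarith : (-1:ℤ) * B 0 2 ≤ 0),
                max_eq_right (by linarith : (-1:ℤ) * B 0 1 ≤ 0)]
            ring
        · exact absurd rfl hsm
      · fin_cases m
        · simp only [Fin.zero_eta, Fin.mk_one, Fin.reduceFinMk] at hs ht hst hsm htm hεst hεm ⊢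
          funext j
          have h1 : 0 ≤ B 1 2 := ht 2 (by decide)
          have h2 : 0 ≤ B 1 0 := ht 0 (by decide)
          have hE : ε 0 = -ε 2 := hεm
          have hkey := key 1 2 0 (by decide) (by decide) (by decide)
          simp only [cmut, sgn, Fin.sum_univ_three, Pi.add_apply, Pi.smul_apply, Pi.neg_apply,
            smul_eq_mul, Fin.reduceEq, reduceIte, if_true, reduceCtorEq]
          by_cases hh : ∀ x, 0 ≤ c 1 x
          · rw [if_pos hh]
            have e1 : max (1 * B 1 2) 0 = |B 1 2| := by
              rw [abs_of_nonneg h1, show (1:ℤ) * B 1 2 = B 1 2 by ring]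
              exact max_eq_left h1
            have e2 : max (1 * B 1 0) 0 = |B 1 0| := by
              rw [abs_of_nonneg h2, show (1:ℤ) * B 1 0 = B 1 0 by ring]
              exact max_eq_left h2
            rw [e1, e2]
            linear_combination (-(ε 2) * c 1 j) * hkey +
              (-(ucyc B d 0 * |B 1 0| * c 1 j)) * hE
          · rw [if_neg hh]
            rw [max_eq_right (by linarith : (-1:ℤ) * B 1 2 ≤ 0),
                max_eq_right (by linarith : (-1:ℤ) * B 1 0 ≤ 0)]
            ring
        · exact absurd rfl htm
        · exact absurd rfl hsm
      · exact absurd rfl hst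
end

section
/- Mutation at a non-source non-sink vertex of an acyclic diagram produces the cyclic radical coordinates up to global sign: let (c,B) be a Y-seed with c a sign-coherent basis of Q^3, B a 3×3 skew-symmetrizable matrix (skew-symmetrizer diag(d_1,d_2,d_3)) whose diagram is acyclic with all three edges present, and let u = a_1c_1 + a_2c_2 + a_3c_3 with (a_1,a_2,a_3) = (±d_2|B_{23}|, ±d_3|B_{31}|, ±d_1|B_{12}|), the source and sink coordinates sharing one sign and the third coordinate the opposite sign. If k is neither a source nor a sink and (c',B') = μ_k(c,B), then the coordinate vector of u in the basis c' equals (d_2|B'_{23}|, d_3|B'_{31}|, d_1|B'_{12}|) or its negative. -/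
open Matrix BigOperators

lemma opp_neg {di dj x y : ℤ} (hdi : 0 < di) (hdj : 0 < dj)
    (h : di * x = -(dj * y)) (hy : 0 < y) : x < 0 := by nlinarith
lemma opp_pos {di dj x y : ℤ} (hdi : 0 < di) (hdj : 0 < dj)
    (h : di * x = -(dj * y)) (hy : y < 0) : 0 < x := by nlinarith
lemma ne_sym {di dj x y : ℤ} (hdi : 0 < di) (hdj : 0 < dj)
    (h : di * x = -(dj * y)) (hy : y ≠ 0) : x ≠ 0 := by
  intro hx
  rw [hx, mul_zero] at h
  have h2 : dj * y = 0 := by linarith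
  rcases mul_eq_zero.mp h2 with h3 | h3
  · omega
  · exact hy h3

set_option maxHeartbeats 1600000 in
theorem radical_coords_midpoint_mutation (B : Matrix (Fin 3) (Fin 3) ℤ)
    (d : Fin 3 → ℤ) (hd : skewSymmetrizer d B) (hacyc : ¬ isCyclic B)
    (hedges : B 1 0 ≠ 0 ∧ B 2 1 ≠ 0 ∧ B 0 2 ≠ 0)
    (c : Fin 3 → Fin 3 → ℤ)
    (hbasis : LinearIndependent ℚ (fun i => fun j => (c i j : ℚ)))
    (hc : ∀ i, signCoherent (c i))
    (s t m : Fin 3) (hst : s ≠ t) (hsm : s ≠ m) (htm : t ≠ m)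
    (hs : isSource B s) (ht : isSink B t)
    (ε : Fin 3 → ℤ) (hε : ∀ i, ε i = 1 ∨ ε i = -1)
    (hεst : ε s = ε t) (hεm : ε m = -ε s)
    (k : Fin 3) (hk : k = m) :
    (fun j => ∑ i, (ε i * ucyc B d i) * c i j) =
        (fun j => ∑ i, ucyc (mutate B k) d i * cmut B k c i j) ∨
      (fun j => ∑ i, (ε i * ucyc B d i) * c i j) =
        (fun j => ∑ i, -(ucyc (mutate B k) d i) * cmut B k c i j) := by
  obtain ⟨hdpos, hsk⟩ := hd
  obtain ⟨he10, he21, he02⟩ := hedges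
  subst hk
  clear hacyc hbasis hc
  have n01 : B 0 1 ≠ 0 := ne_sym (hdpos 0) (hdpos 1) (hsk 0 1) he10
  have n12 : B 1 2 ≠ 0 := ne_sym (hdpos 1) (hdpos 2) (hsk 1 2) he21
  have n20 : B 2 0 ≠ 0 := ne_sym (hdpos 2) (hdpos 0) (hsk 2 0) he02
  have e : ∀ a : Fin 3, a = 0 ∨ a = 1 ∨ a = 2 := by decide
  have hσ : sgn (c k) = 1 ∨ sgn (c k) = -1 := by unfold sgn; split <;> simp
  rcases e s with rfl|rfl|rfl <;> rcases e t with rfl|rfl|rfl <;> rcases e k with rfl|rfl|rfl <;>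
    first | exact absurd rfl hst | exact absurd rfl hsm | exact absurd rfl htm | skip
  · -- (s,t,m) = (0,1,2)
    have hBst : B 0 1 < 0 := lt_of_le_of_ne (hs 1 (by decide)) n01
    have hBsm : B 0 2 < 0 := lt_of_le_of_ne (hs 2 (by decide)) he02
    have hBts : 0 < B 1 0 := lt_of_le_of_ne' (ht 0 (by decide)) he10
    have hBtm : 0 < B 1 2 := lt_of_le_of_ne' (ht 2 (by decide)) n12
    have hBms : 0 < B 2 0 := opp_pos (hdpos 2) (hdpos 0) (hsk 2 0) hBsm
    have hBmt : B 2 1 < 0 := opp_neg (hdpos 2) (hdpos 1) (hsk 2 1) hBtm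
    rcases hε 0 with hε0 | hε0 <;> [left; right] <;>
      [ (have hεt : ε 1 = 1 := by omega
         have hεm' : ε 2 = -1 := by omega);
        (have hεt : ε 1 = -1 := by omega
         have hεm' : ε 2 = 1 := by omega)] <;>
      funext j <;>
      rcases hσ with hσ | hσ <;>
        simp only [ucyc, cmut, mutate, Fin.sum_univ_three, hε0, hεt, hεm', hσ,
          Matrix.cons_val_zero, Matrix.cons_val_one, Matrix.head_cons, Matrix.cons_val_two,
          Matrix.tail_cons, Pi.add_apply, Pi.neg_apply, Pi.smul_apply, smul_eq_mul,
          Fin.isValue, show (0:Fin 3) ≠ 2 from (by decide), show (1:Fin 3) ≠ 2 from (by decide),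
          if_true, if_false, true_or, or_true, false_or, or_false, or_self, ite_true, ite_false, reduceIte, reduceCtorEq, one_mul, neg_one_mul, neg_neg, mul_one,
          abs_neg, mul_zero, zero_mul, add_zero, sub_zero, neg_mul, mul_neg, neg_zero,
          max_eq_left hBms.le, max_eq_right hBmt.le, max_eq_left (neg_nonneg.mpr hBmt.le),
          max_eq_right (neg_nonpos.mpr hBms.le), max_eq_left hBtm.le, max_eq_right hBsm.le,
          max_eq_left (neg_nonneg.mpr hBsm.le), max_eq_right (neg_nonpos.mpr hBtm.le),
          abs_of_neg (show B 0 1 - B 0 2 * B 2 1 < (0:ℤ) by nlinarith), abs_of_pos hBtm, abs_of_pos hBms, abs_of_neg hBst] <;>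
      [ linear_combination (-1) * B 2 0 * c 2 j * hsk 1 2 + B 2 1 * c 2 j * hsk 0 2;
        linear_combination B 2 1 * c 2 j * hsk 0 2;
        linear_combination B 2 0 * c 2 j * hsk 1 2 + (-1) * B 2 1 * c 2 j * hsk 0 2;
        linear_combination (-1) * B 2 1 * c 2 j * hsk 0 2]
  · -- (s,t,m) = (0,2,1)
    have hBst : B 0 2 < 0 := lt_of_le_of_ne (hs 2 (by decide)) he02
    have hBsm : B 0 1 < 0 := lt_of_le_of_ne (hs 1 (by decide)) n01
    have hBts : 0 < B 2 0 := lt_of_le_of_ne' (ht 0 (by decide)) n20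
    have hBtm : 0 < B 2 1 := lt_of_le_of_ne' (ht 1 (by decide)) he21
    have hBms : 0 < B 1 0 := opp_pos (hdpos 1) (hdpos 0) (hsk 1 0) hBsm
    have hBmt : B 1 2 < 0 := opp_neg (hdpos 1) (hdpos 2) (hsk 1 2) hBtm
    rcases hε 0 with hε0 | hε0 <;> [left; right] <;>
      [ (have hεt : ε 2 = 1 := by omega
         have hεm' : ε 1 = -1 := by omega);
        (have hεt : ε 2 = -1 := by omega
         have hεm' : ε 1 = 1 := by omega)] <;>
      funext j <;>
      rcases hσ with hσ | hσ <;>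
        simp only [ucyc, cmut, mutate, Fin.sum_univ_three, hε0, hεt, hεm', hσ,
          Matrix.cons_val_zero, Matrix.cons_val_one, Matrix.head_cons, Matrix.cons_val_two,
          Matrix.tail_cons, Pi.add_apply, Pi.neg_apply, Pi.smul_apply, smul_eq_mul,
          Fin.isValue, show (0:Fin 3) ≠ 1 from (by decide), show (2:Fin 3) ≠ 1 from (by decide),
          if_true, if_false, true_or, or_true, false_or, or_false, or_self, ite_true, ite_false, reduceIte, reduceCtorEq, one_mul, neg_one_mul, neg_neg, mul_one,
          abs_neg, mul_zero, zero_mul, add_zero, sub_zero, neg_mul, mul_neg, neg_zero,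
          max_eq_left hBms.le, max_eq_right hBmt.le, max_eq_left (neg_nonneg.mpr hBmt.le),
          max_eq_right (neg_nonpos.mpr hBms.le), max_eq_left hBtm.le, max_eq_right hBsm.le,
          max_eq_left (neg_nonneg.mpr hBsm.le), max_eq_right (neg_nonpos.mpr hBtm.le),
          abs_of_pos (show (0:ℤ) < B 2 0 + B 2 1 * B 1 0 by nlinarith), abs_of_neg hBmt, abs_of_pos hBts, abs_of_neg hBsm] <;>
      [ linear_combination B 1 0 * c 1 j * hsk 1 2;
        linear_combination (-1) * B 1 2 * c 1 j * hsk 0 1 + B 1 0 * c 1 j * hsk 1 2;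
        linear_combination (-1) * B 1 0 * c 1 j * hsk 1 2;
        linear_combination B 1 2 * c 1 j * hsk 0 1 + (-1) * B 1 0 * c 1 j * hsk 1 2]
  · -- (s,t,m) = (1,0,2)
    have hBst : B 1 0 < 0 := lt_of_le_of_ne (hs 0 (by decide)) he10
    have hBsm : B 1 2 < 0 := lt_of_le_of_ne (hs 2 (by decide)) n12
    have hBts : 0 < B 0 1 := lt_of_le_of_ne' (ht 1 (by decide)) n01
    have hBtm : 0 < B 0 2 := lt_of_le_of_ne' (ht 2 (by decide)) he02
    have hBms : 0 < B 2 1 := opp_pos (hdpos 2) (hdpos 1) (hsk 2 1) hBsm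
    have hBmt : B 2 0 < 0 := opp_neg (hdpos 2) (hdpos 0) (hsk 2 0) hBtm
    rcases hε 1 with hε0 | hε0 <;> [left; right] <;>
      [ (have hεt : ε 0 = 1 := by omega
         have hεm' : ε 2 = -1 := by omega);
        (have hεt : ε 0 = -1 := by omega
         have hεm' : ε 2 = 1 := by omega)] <;>
      funext j <;>
      rcases hσ with hσ | hσ <;>
        simp only [ucyc, cmut, mutate, Fin.sum_univ_three, hε0, hεt, hεm', hσ,
          Matrix.cons_val_zero, Matrix.cons_val_one, Matrix.head_cons, Matrix.cons_val_two,
          Matrix.tail_cons, Pi.add_apply, Pi.neg_apply, Pi.smul_apply, smul_eq_mul,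
          Fin.isValue, show (1:Fin 3) ≠ 2 from (by decide), show (0:Fin 3) ≠ 2 from (by decide),
          if_true, if_false, true_or, or_true, false_or, or_false, or_self, ite_true, ite_false, reduceIte, reduceCtorEq, one_mul, neg_one_mul, neg_neg, mul_one,
          abs_neg, mul_zero, zero_mul, add_zero, sub_zero, neg_mul, mul_neg, neg_zero,
          max_eq_left hBms.le, max_eq_right hBmt.le, max_eq_left (neg_nonneg.mpr hBmt.le),
          max_eq_right (neg_nonpos.mpr hBms.le), max_eq_left hBtm.le, max_eq_right hBsm.le,
          max_eq_left (neg_nonneg.mpr hBsm.le), max_eq_right (neg_nonpos.mpr hBtm.le),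
          abs_of_pos (show (0:ℤ) < B 0 1 + B 0 2 * B 2 1 by nlinarith), abs_of_neg hBsm, abs_of_neg hBmt, abs_of_pos hBts] <;>
      [ linear_combination B 2 1 * c 2 j * hsk 0 2;
        linear_combination (-1) * B 2 0 * c 2 j * hsk 1 2 + B 2 1 * c 2 j * hsk 0 2;
        linear_combination (-1) * B 2 1 * c 2 j * hsk 0 2;
        linear_combination B 2 0 * c 2 j * hsk 1 2 + (-1) * B 2 1 * c 2 j * hsk 0 2]
  · -- (s,t,m) = (1,2,0)
    have hBst : B 1 2 < 0 := lt_of_le_of_ne (hs 2 (by decide)) n12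
    have hBsm : B 1 0 < 0 := lt_of_le_of_ne (hs 0 (by decide)) he10
    have hBts : 0 < B 2 1 := lt_of_le_of_ne' (ht 1 (by decide)) he21
    have hBtm : 0 < B 2 0 := lt_of_le_of_ne' (ht 0 (by decide)) n20
    have hBms : 0 < B 0 1 := opp_pos (hdpos 0) (hdpos 1) (hsk 0 1) hBsm
    have hBmt : B 0 2 < 0 := opp_neg (hdpos 0) (hdpos 2) (hsk 0 2) hBtm
    rcases hε 1 with hε0 | hε0 <;> [left; right] <;>
      [ (have hεt : ε 2 = 1 := by omega
         have hεm' : ε 0 = -1 := by omega);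
        (have hεt : ε 2 = -1 := by omega
         have hεm' : ε 0 = 1 := by omega)] <;>
      funext j <;>
      rcases hσ with hσ | hσ <;>
        simp only [ucyc, cmut, mutate, Fin.sum_univ_three, hε0, hεt, hεm', hσ,
          Matrix.cons_val_zero, Matrix.cons_val_one, Matrix.head_cons, Matrix.cons_val_two,
          Matrix.tail_cons, Pi.add_apply, Pi.neg_apply, Pi.smul_apply, smul_eq_mul,
          Fin.isValue, show (1:Fin 3) ≠ 0 from (by decide), show (2:Fin 3) ≠ 0 from (by decide),
          if_true, if_false, true_or, or_true, false_or, or_false, or_self, ite_true, ite_false, reduceIte, reduceCtorEq, one_mul, neg_one_mul, neg_neg, mul_one,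
          abs_neg, mul_zero, zero_mul, add_zero, sub_zero, neg_mul, mul_neg, neg_zero,
          max_eq_left hBms.le, max_eq_right hBmt.le, max_eq_left (neg_nonneg.mpr hBmt.le),
          max_eq_right (neg_nonpos.mpr hBms.le), max_eq_left hBtm.le, max_eq_right hBsm.le,
          max_eq_left (neg_nonneg.mpr hBsm.le), max_eq_right (neg_nonpos.mpr hBtm.le),
          abs_of_neg (show B 1 2 - B 1 0 * B 0 2 < (0:ℤ) by nlinarith), abs_of_neg hBst, abs_of_pos hBtm, abs_of_pos hBms] <;>
      [ linear_combination B 0 2 * c 0 j * hsk 0 1 + (-1) * B 0 1 * c 0 j * hsk 0 2;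
        linear_combination B 0 2 * c 0 j * hsk 0 1;
        linear_combination (-1) * B 0 2 * c 0 j * hsk 0 1 + B 0 1 * c 0 j * hsk 0 2;
        linear_combination (-1) * B 0 2 * c 0 j * hsk 0 1]
  · -- (s,t,m) = (2,0,1)
    have hBst : B 2 0 < 0 := lt_of_le_of_ne (hs 0 (by decide)) n20
    have hBsm : B 2 1 < 0 := lt_of_le_of_ne (hs 1 (by decide)) he21
    have hBts : 0 < B 0 2 := lt_of_le_of_ne' (ht 2 (by decide)) he02
    have hBtm : 0 < B 0 1 := lt_of_le_of_ne' (ht 1 (by decide)) n01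
    have hBms : 0 < B 1 2 := opp_pos (hdpos 1) (hdpos 2) (hsk 1 2) hBsm
    have hBmt : B 1 0 < 0 := opp_neg (hdpos 1) (hdpos 0) (hsk 1 0) hBtm
    rcases hε 2 with hε0 | hε0 <;> [left; right] <;>
      [ (have hεt : ε 0 = 1 := by omega
         have hεm' : ε 1 = -1 := by omega);
        (have hεt : ε 0 = -1 := by omega
         have hεm' : ε 1 = 1 := by omega)] <;>
      funext j <;>
      rcases hσ with hσ | hσ <;>
        simp only [ucyc, cmut, mutate, Fin.sum_univ_three, hε0, hεt, hεm', hσ,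
          Matrix.cons_val_zero, Matrix.cons_val_one, Matrix.head_cons, Matrix.cons_val_two,
          Matrix.tail_cons, Pi.add_apply, Pi.neg_apply, Pi.smul_apply, smul_eq_mul,
          Fin.isValue, show (2:Fin 3) ≠ 1 from (by decide), show (0:Fin 3) ≠ 1 from (by decide),
          if_true, if_false, true_or, or_true, false_or, or_false, or_self, ite_true, ite_false, reduceIte, reduceCtorEq, one_mul, neg_one_mul, neg_neg, mul_one,
          abs_neg, mul_zero, zero_mul, add_zero, sub_zero, neg_mul, mul_neg, neg_zero,
          max_eq_left hBms.le, max_eq_right hBmt.le, max_eq_left (neg_nonneg.mpr hBmt.le),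
          max_eq_right (neg_nonpos.mpr hBms.le), max_eq_left hBtm.le, max_eq_right hBsm.le,
          max_eq_left (neg_nonneg.mpr hBsm.le), max_eq_right (neg_nonpos.mpr hBtm.le),
          abs_of_neg (show B 2 0 - B 2 1 * B 1 0 < (0:ℤ) by nlinarith), abs_of_pos hBms, abs_of_neg hBst, abs_of_pos hBtm] <;>
      [ linear_combination (-1) * B 1 2 * c 1 j * hsk 0 1 + B 1 0 * c 1 j * hsk 1 2;
        linear_combination B 1 0 * c 1 j * hsk 1 2;
        linear_combination B 1 2 * c 1 j * hsk 0 1 + (-1) * B 1 0 * c 1 j * hsk 1 2;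
        linear_combination (-1) * B 1 0 * c 1 j * hsk 1 2]
  · -- (s,t,m) = (2,1,0)
    have hBst : B 2 1 < 0 := lt_of_le_of_ne (hs 1 (by decide)) he21
    have hBsm : B 2 0 < 0 := lt_of_le_of_ne (hs 0 (by decide)) n20
    have hBts : 0 < B 1 2 := lt_of_le_of_ne' (ht 2 (by decide)) n12
    have hBtm : 0 < B 1 0 := lt_of_le_of_ne' (ht 0 (by decide)) he10
    have hBms : 0 < B 0 2 := opp_pos (hdpos 0) (hdpos 2) (hsk 0 2) hBsm
    have hBmt : B 0 1 < 0 := opp_neg (hdpos 0) (hdpos 1) (hsk 0 1) hBtm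
    rcases hε 2 with hε0 | hε0 <;> [left; right] <;>
      [ (have hεt : ε 1 = 1 := by omega
         have hεm' : ε 0 = -1 := by omega);
        (have hεt : ε 1 = -1 := by omega
         have hεm' : ε 0 = 1 := by omega)] <;>
      funext j <;>
      rcases hσ with hσ | hσ <;>
        simp only [ucyc, cmut, mutate, Fin.sum_univ_three, hε0, hεt, hεm', hσ,
          Matrix.cons_val_zero, Matrix.cons_val_one, Matrix.head_cons, Matrix.cons_val_two,
          Matrix.tail_cons, Pi.add_apply, Pi.neg_apply, Pi.smul_apply, smul_eq_mul,
          Fin.isValue, show (2:Fin 3) ≠ 0 from (by decide), show (1:Fin 3) ≠ 0 from (by decide),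
          if_true, if_false, true_or, or_true, false_or, or_false, or_self, ite_true, ite_false, reduceIte, reduceCtorEq, one_mul, neg_one_mul, neg_neg, mul_one,
          abs_neg, mul_zero, zero_mul, add_zero, sub_zero, neg_mul, mul_neg, neg_zero,
          max_eq_left hBms.le, max_eq_right hBmt.le, max_eq_left (neg_nonneg.mpr hBmt.le),
          max_eq_right (neg_nonpos.mpr hBms.le), max_eq_left hBtm.le, max_eq_right hBsm.le,
          max_eq_left (neg_nonneg.mpr hBsm.le), max_eq_right (neg_nonpos.mpr hBtm.le),
          abs_of_pos (show (0:ℤ) < B 1 2 + B 1 0 * B 0 2 by nlinarith), abs_of_pos hBts, abs_of_neg hBsm, abs_of_neg hBmt] <;>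
      [ linear_combination B 0 2 * c 0 j * hsk 0 1;
        linear_combination B 0 2 * c 0 j * hsk 0 1 + (-1) * B 0 1 * c 0 j * hsk 0 2;
        linear_combination (-1) * B 0 2 * c 0 j * hsk 0 1;
        linear_combination (-1) * B 0 2 * c 0 j * hsk 0 1 + B 0 1 * c 0 j * hsk 0 2]
end

section
/- A 3×3 skew-symmetrizable matrix whose diagram stays cyclic along a mutation sequence admits no maximal green sequence along that sequence: let B_0 be a 3×3 skew-symmetrizable matrix and (c_0, B_0) the initial Y-seed with c_0 the standard basis. Suppose (i_1,...,i_l) is a sequence of indices such that all mutated c-vectors are sign coherent, the diagram of every intermediate matrix B_j = μ_{i_j}∘···∘μ_{i_1}(B_0) (0 ≤ j ≤ l) is cyclic, and (c',B') = μ_{i_l}∘···∘μ_{i_1}(c_0,B_0). Then it is impossible that all three vectors c'_1, c'_2, c'_3 are entrywise negative (≤ 0 and nonzero). -/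
open Matrix BigOperators

lemma skew_mutate {n : ℕ} {d : Fin n → ℤ} {B : Matrix (Fin n) (Fin n) ℤ} (k : Fin n)
    (h : skewSymmetrizer d B) : skewSymmetrizer d (mutate B k) := by
  obtain ⟨hd, hs⟩ := h
  refine ⟨hd, fun i j => ?_⟩
  unfold mutate
  by_cases hij : i = k ∨ j = k
  · simp only [if_pos hij, if_pos hij.symm]
    have := hs i j; ring_nf; linarith
  · have hij' : ¬ (j = k ∨ i = k) := fun hc => hij (hc.symm)
    simp only [if_neg hij, if_neg hij']
    have e1 : d i * max (B i k) 0 = d k * max (-(B k i)) 0 := by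
      rw [mul_max_of_nonneg _ _ (hd i).le, mul_max_of_nonneg _ _ (hd k).le]
      rw [mul_zero, mul_zero, hs i k]; ring_nf
    have e2 : d k * max (B k j) 0 = d j * max (-(B j k)) 0 := by
      rw [mul_max_of_nonneg _ _ (hd k).le, mul_max_of_nonneg _ _ (hd j).le]
      rw [mul_zero, mul_zero, hs k j]; ring_nf
    have e3 : d i * max (-(B i k)) 0 = d k * max (B k i) 0 := by
      rw [mul_max_of_nonneg _ _ (hd i).le, mul_max_of_nonneg _ _ (hd k).le]
      rw [mul_zero, mul_zero]
      have : d i * -B i k = d k * B k i := by have := hs i k; linarith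
      rw [this]
    have e4 : d k * max (-(B k j)) 0 = d j * max (B j k) 0 := by
      rw [mul_max_of_nonneg _ _ (hd k).le, mul_max_of_nonneg _ _ (hd j).le]
      rw [mul_zero, mul_zero]
      have : d k * -B k j = d j * B j k := by have := hs k j; linarith
      rw [this]
    have hk := (hd k).ne'
    apply mul_left_cancel₀ hk
    have p1 : d k * (d i * (max (B i k) 0 * max (B k j) 0))
        = d k * (d j * (max (-(B j k)) 0 * max (-(B k i)) 0)) := by
      calc d k * (d i * (max (B i k) 0 * max (B k j) 0))
          = (d i * max (B i k) 0) * (d k * max (B k j) 0) := by ring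
        _ = (d k * max (-(B k i)) 0) * (d j * max (-(B j k)) 0) := by rw [e1, e2]
        _ = d k * (d j * (max (-(B j k)) 0 * max (-(B k i)) 0)) := by ring
    have p2 : d k * (d i * (max (-(B i k)) 0 * max (-(B k j)) 0))
        = d k * (d j * (max (B j k) 0 * max (B k i) 0)) := by
      calc d k * (d i * (max (-(B i k)) 0 * max (-(B k j)) 0))
          = (d i * max (-(B i k)) 0) * (d k * max (-(B k j)) 0) := by ring
        _ = (d k * max (B k i) 0) * (d j * max (B j k) 0) := by rw [e3, e4]
        _ = d k * (d j * (max (B j k) 0 * max (B k i) 0)) := by ring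
    have hij0 := hs i j
    linear_combination d k * hij0 + p1 - p2

lemma core (dk dp dq bkp bpk bqp bpq bkq bqk e : ℤ)
    (hdk : 0 < dk) (hdp : 0 < dp) (hdq : 0 < dq)
    (s1 : dk * bkp = -(dp * bpk)) (s2 : dp * bpq = -(dq * bqp)) (s3 : dq * bqk = -(dk * bkq))
    (hcyc : (0 < bpk ∧ 0 < bqp ∧ 0 < bkq) ∨ (bpk < 0 ∧ bqp < 0 ∧ bkq < 0))
    (hcyc' : (0 < -bpk ∧ 0 < bqp + max bqk 0 * max bkp 0 - max (-bqk) 0 * max (-bkp) 0 ∧ 0 < -bkq)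
         ∨ (-bpk < 0 ∧ bqp + max bqk 0 * max bkp 0 - max (-bqk) 0 * max (-bkp) 0 < 0 ∧ -bkq < 0))
    (he : e = 1 ∨ e = -1) :
    dp * |bpq + max bpk 0 * max bkq 0 - max (-bpk) 0 * max (-bkq) 0| + dp * |bpq|
      = dq * |bqk| * max (e * bkp) 0 + dk * |bkp| * max (e * bkq) 0 := by
  rcases hcyc with ⟨h1, h2, h3⟩ | ⟨h1, h2, h3⟩
  · -- positive cycle: bpk>0, bqp>0, bkq>0 ⇒ bkp<0, bqk<0, bpq<0
    have hbkp : bkp < 0 := by nlinarith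
    have hbqk : bqk < 0 := by nlinarith
    have hbpq : bpq < 0 := by nlinarith
    have m1 : max bpk 0 = bpk := max_eq_left h1.le
    have m2 : max (-bpk) 0 = 0 := max_eq_right (by linarith)
    have m3 : max bkq 0 = bkq := max_eq_left h3.le
    have m4 : max (-bkq) 0 = 0 := max_eq_right (by linarith)
    have m5 : max bqk 0 = 0 := max_eq_right hbqk.le
    have m6 : max (-bqk) 0 = -bqk := max_eq_left (by linarith)
    have m7 : max bkp 0 = 0 := max_eq_right hbkp.le
    have m8 : max (-bkp) 0 = -bkp := max_eq_left (by linarith)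
    rw [m5, m6, m7, m8] at hcyc'
    rcases hcyc' with ⟨h1', _, _⟩ | ⟨_, h2', _⟩
    · linarith
    have hq : bqp - bqk * bkp < 0 := by nlinarith [h2']
    have key2 : dp * (bpq + bpk * bkq) = -(dq * (bqp - bqk * bkp)) := by
      linear_combination s2 + bkq * s1 - bkp * s3
    have hpq' : 0 < bpq + bpk * bkq := by nlinarith [mul_pos hdq (show 0 < -(bqp - bqk * bkp) by linarith)]
    rw [m1, m2, m3, m4]
    rw [show bpq + bpk * bkq - 0 * 0 = bpq + bpk * bkq by ring]
    rw [abs_of_pos hpq', abs_of_neg hbpq, abs_of_neg hbqk, abs_of_neg hbkp]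
    rcases he with rfl | rfl
    · rw [one_mul, one_mul, max_eq_right hbkp.le, max_eq_left h3.le]
      linear_combination bkq * s1
    · rw [show (-1 : ℤ) * bkp = -bkp by ring, show (-1 : ℤ) * bkq = -bkq by ring,
        max_eq_left (by linarith : (0:ℤ) ≤ -bkp), max_eq_right (by linarith : -bkq ≤ (0:ℤ))]
      linear_combination bkq * s1 - bkp * s3
  · -- negative cycle
    have hbkp : 0 < bkp := by nlinarith
    have hbqk : 0 < bqk := by nlinarith
    have hbpq : 0 < bpq := by nlinarith
    have m1 : max bpk 0 = 0 := max_eq_right h1.le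
    have m2 : max (-bpk) 0 = -bpk := max_eq_left (by linarith)
    have m3 : max bkq 0 = 0 := max_eq_right h3.le
    have m4 : max (-bkq) 0 = -bkq := max_eq_left (by linarith)
    have m5 : max bqk 0 = bqk := max_eq_left hbqk.le
    have m6 : max (-bqk) 0 = 0 := max_eq_right (by linarith)
    have m7 : max bkp 0 = bkp := max_eq_left hbkp.le
    have m8 : max (-bkp) 0 = 0 := max_eq_right (by linarith)
    rw [m5, m6, m7, m8] at hcyc'
    rcases hcyc' with ⟨_, h2', _⟩ | ⟨_, _, h3'⟩
    · have hq : 0 < bqp + bqk * bkp := by nlinarith [h2']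
      have key2 : dp * (bpq - bpk * bkq) = -(dq * (bqp + bqk * bkp)) := by
        linear_combination s2 - bkq * s1 + bkp * s3
      have hpq' : bpq - bpk * bkq < 0 := by
        nlinarith [mul_pos hdq hq]
      rw [m1, m2, m3, m4]
      rw [show bpq + 0 * 0 - -bpk * -bkq = bpq - bpk * bkq by ring]
      rw [abs_of_neg hpq', abs_of_pos hbpq, abs_of_pos hbqk, abs_of_pos hbkp]
      rcases he with rfl | rfl
      · rw [one_mul, one_mul, max_eq_left hbkp.le, max_eq_right h3.le]
        linear_combination bkq * s1 - bkp * s3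
      · rw [show (-1 : ℤ) * bkp = -bkp by ring, show (-1 : ℤ) * bkq = -bkq by ring,
          max_eq_right (by linarith : -bkp ≤ (0:ℤ)), max_eq_left (by linarith : (0:ℤ) ≤ -bkq)]
        linear_combination bkq * s1
    · linarith

lemma step (d : Fin 3 → ℤ) (B : Matrix (Fin 3) (Fin 3) ℤ) (hd : skewSymmetrizer d B)
    (hc : isCyclic B) (k : Fin 3) (hc' : isCyclic (mutate B k))
    (c : Fin 3 → Fin 3 → ℤ) (m : Fin 3) :
    ∑ i, ucyc (mutate B k) d i * cmut B k c i m = ∑ i, ucyc B d i * c i m := by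
  obtain ⟨hdp, hs⟩ := hd
  have hk : k = 0 ∨ k = 1 ∨ k = 2 := by fin_cases k <;> decide
  rcases hk with rfl | rfl | rfl
  · -- k = 0, p = 1, q = 2
    have key := core (d 0) (d 1) (d 2) (B 0 1) (B 1 0) (B 2 1) (B 1 2) (B 0 2) (B 2 0)
      (sgn (c 0)) (hdp 0) (hdp 1) (hdp 2) (hs 0 1) (hs 1 2) (hs 2 0) hc
      (by simpa [mutate, isCyclic] using hc') (sgn_cases (c 0))
    simp only [Fin.sum_univ_three, ucyc, cmut, mutate, Fin.isValue, Matrix.cons_val_zero,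
      Matrix.cons_val_one, Matrix.head_cons, Matrix.cons_val_two, Matrix.tail_cons,
      Pi.add_apply, Pi.smul_apply, Pi.neg_apply, smul_eq_mul,
      show ((2:Fin 3) = 0) = False by simp, show ((1:Fin 3) = 0) = False by simp,
      if_false, if_true]
    norm_num
    linear_combination (-(c 0 m)) * key
  · -- k = 1, p = 2, q = 0
    have key := core (d 1) (d 2) (d 0) (B 1 2) (B 2 1) (B 0 2) (B 2 0) (B 1 0) (B 0 1)
      (sgn (c 1)) (hdp 1) (hdp 2) (hdp 0) (hs 1 2) (hs 2 0) (hs 0 1)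
      (by rcases hc with ⟨h1, h2, h3⟩ | ⟨h1, h2, h3⟩
          · exact Or.inl ⟨by linarith, by linarith, by linarith⟩
          · exact Or.inr ⟨by linarith, by linarith, by linarith⟩)
      (by have h := hc'
          simp only [isCyclic] at h
          simp [mutate] at h
          rcases h with ⟨h1, h2, h3⟩ | ⟨h1, h2, h3⟩
          · exact Or.inl ⟨by linarith, by linarith, by linarith⟩
          · exact Or.inr ⟨by linarith, by linarith, by linarith⟩)
      (sgn_cases (c 1))
    simp only [Fin.sum_univ_three, ucyc, cmut, mutate, Fin.isValue, Matrix.cons_val_zero,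
      Matrix.cons_val_one, Matrix.head_cons, Matrix.cons_val_two, Matrix.tail_cons,
      Pi.add_apply, Pi.smul_apply, Pi.neg_apply, smul_eq_mul,
      show ((2:Fin 3) = 1) = False by simp, show ((0:Fin 3) = 1) = False by simp,
      if_false, if_true]
    norm_num
    linear_combination (-(c 1 m)) * key
  · -- k = 2, p = 0, q = 1
    have key := core (d 2) (d 0) (d 1) (B 2 0) (B 0 2) (B 1 0) (B 0 1) (B 2 1) (B 1 2)
      (sgn (c 2)) (hdp 2) (hdp 0) (hdp 1) (hs 2 0) (hs 0 1) (hs 1 2)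
      (by rcases hc with ⟨h1, h2, h3⟩ | ⟨h1, h2, h3⟩
          · exact Or.inl ⟨by linarith, by linarith, by linarith⟩
          · exact Or.inr ⟨by linarith, by linarith, by linarith⟩)
      (by have h := hc'
          simp only [isCyclic] at h
          simp [mutate] at h
          rcases h with ⟨h1, h2, h3⟩ | ⟨h1, h2, h3⟩
          · exact Or.inl ⟨by linarith, by linarith, by linarith⟩
          · exact Or.inr ⟨by linarith, by linarith, by linarith⟩)
      (sgn_cases (c 2))
    simp only [Fin.sum_univ_three, ucyc, cmut, mutate, Fin.isValue, Matrix.cons_val_zero,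
      Matrix.cons_val_one, Matrix.head_cons, Matrix.cons_val_two, Matrix.tail_cons,
      Pi.add_apply, Pi.smul_apply, Pi.neg_apply, smul_eq_mul,
      show ((0:Fin 3) = 2) = False by simp, show ((1:Fin 3) = 2) = False by simp,
      if_false, if_true]
    norm_num
    linear_combination (-(c 2 m)) * key

lemma main_inv (d : Fin 3 → ℤ) (B : Matrix (Fin 3) (Fin 3) ℤ) (hd : skewSymmetrizer d B) :
    ∀ l : List (Fin 3), (∀ j ≤ l.length, isCyclic ((l.take j).foldl ymut (stdc 3, B)).2) →
      skewSymmetrizer d (l.foldl ymut (stdc 3, B)).2 ∧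
      ∀ m, (∑ i, ucyc (l.foldl ymut (stdc 3, B)).2 d i * (l.foldl ymut (stdc 3, B)).1 i m)
        = ucyc B d m := by
  intro l
  induction l using List.reverseRecOn with
  | nil =>
    intro _
    refine ⟨hd, fun m => ?_⟩
    fin_cases m <;> simp [Fin.sum_univ_three, stdc, ucyc]
  | append_singleton l a ih =>
    intro h
    have hpre : ∀ j ≤ l.length, isCyclic ((l.take j).foldl ymut (stdc 3, B)).2 := by
      intro j hj
      have := h j (le_trans hj (by simp))
      rwa [List.take_append_of_le_length hj] at this
    obtain ⟨sk, inv⟩ := ih hpre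
    have hcycl : isCyclic (l.foldl ymut (stdc 3, B)).2 := by
      have := h l.length (by simp)
      rwa [List.take_left] at this
    have hcyc2 : isCyclic (mutate (l.foldl ymut (stdc 3, B)).2 a) := by
      have := h (l.length + 1) (by simp)
      rw [show l.length + 1 = (l ++ [a]).length by simp, List.take_length] at this
      simpa [List.foldl_append, ymut] using this
    rw [List.foldl_append]
    simp only [List.foldl_cons, List.foldl_nil]
    refine ⟨?_, fun m => ?_⟩
    · simpa [ymut] using skew_mutate a sk
    · have hst := step d (l.foldl ymut (stdc 3, B)).2 sk hcycl a hcyc2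
        (l.foldl ymut (stdc 3, B)).1 m
      simpa [ymut] using hst.trans (inv m)

theorem no_all_negative_when_cyclic (B : Matrix (Fin 3) (Fin 3) ℤ)
    (hB : ∃ d : Fin 3 → ℤ, skewSymmetrizer d B)
    (l : List (Fin 3))
    (h : ∀ j ≤ l.length,
      (∀ i, signCoherent (((l.take j).foldl ymut (stdc 3, B)).1 i)) ∧
        isCyclic ((l.take j).foldl ymut (stdc 3, B)).2) :
    ¬ ∀ i, (∀ m, (l.foldl ymut (stdc 3, B)).1 i m ≤ 0) ∧
        (l.foldl ymut (stdc 3, B)).1 i ≠ 0 := by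
  intro hall
  obtain ⟨d, hd⟩ := hB
  have h' : ∀ j ≤ l.length, isCyclic ((l.take j).foldl ymut (stdc 3, B)).2 :=
    fun j hj => (h j hj).2
  obtain ⟨sk, inv⟩ := main_inv d B hd l h'
  have hB0 : isCyclic B := by
    have := (h 0 (Nat.zero_le _)).2
    simpa using this
  have hB12 : B 1 2 ≠ 0 := by
    have hs12 := hd.2 1 2
    rcases hB0 with ⟨h1, h2, h3⟩ | ⟨h1, h2, h3⟩ <;>
    · intro hz
      rw [hz] at hs12
      nlinarith [hd.1 1, hd.1 2]
  have hpos : 0 < ucyc B d 0 := by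
    simp only [ucyc, Matrix.cons_val_zero]
    exact mul_pos (hd.1 1) (abs_pos.mpr hB12)
  have hinv := inv 0
  set S := l.foldl ymut (stdc 3, B) with hS
  have hterm : ∀ i : Fin 3, ucyc S.2 d i * S.1 i 0 ≤ 0 := by
    intro i
    have hu : 0 ≤ ucyc S.2 d i := by
      fin_cases i <;>
        simp only [ucyc, Matrix.cons_val_zero, Matrix.cons_val_one, Matrix.head_cons,
          Matrix.cons_val_two, Matrix.tail_cons] <;>
        exact mul_nonneg (hd.1 _).le (abs_nonneg _)
    exact mul_nonpos_iff.mpr (Or.inl ⟨hu, (hall i).1 0⟩)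
  rw [Fin.sum_univ_three] at hinv
  linarith [hterm 0, hterm 1, hterm 2]
end
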